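/- arXiv:1812.06070 — 12 statements merged into one kernel-verified Lean document; each statement's English description precedes it below -/
import Mathlib

section
/- Let g, h : ℝ^m → ℝ be strongly convex with modulus ρ > 0, with g differentiable, and set φ := g − h. If x, y ∈ ℝ^m satisfy ∇g(y) ∈ ∂h(x), then φ(y) ≤ φ(x) − ρ‖y − x‖². -/
open scoped RealInnerProductSpace
open Filter Topology

/-- The convex subdifferential of `f` at `x`. -/
def subdiff {m : ℕ} (f : EuclideanSpace ℝ (Fin m) → ℝ) (x : EuclideanSpace ℝ (Fin m)) :
    Set (EuclideanSpace ℝ (Fin m)) :=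
  {u | ∀ z, f x + ⟪u, z - x⟫ ≤ f z}

/-- Strengthened subgradient inequality for strongly convex functions. -/
lemma subgrad_strong_aux {m : ℕ} (f : EuclideanSpace ℝ (Fin m) → ℝ) (ρ : ℝ)
    (hf : ConvexOn ℝ Set.univ fun z => f z - ρ / 2 * ‖z‖ ^ 2)
    (u x y : EuclideanSpace ℝ (Fin m)) (hu : ∀ z, f x + ⟪u, z - x⟫ ≤ f z) :
    f x + ⟪u, y - x⟫ + ρ / 2 * ‖y - x‖ ^ 2 ≤ f y := by
  have hsf : StrongConvexOn Set.univ ρ f := strongConvexOn_iff_convex.mpr hf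
  have key : ∀ t : ℝ, t ∈ Set.Ioo (0:ℝ) 1 →
      ⟪u, y - x⟫ + ρ / 2 * ‖y - x‖ ^ 2 - t * (ρ / 2 * ‖y - x‖ ^ 2) ≤ f y - f x := by
    intro t ht
    have ha : (0:ℝ) ≤ 1 - t := by linarith [ht.2]
    have hb : (0:ℝ) ≤ t := le_of_lt ht.1
    have hab : (1 - t) + t = 1 := by ring
    have h1 := hsf.2 (Set.mem_univ x) (Set.mem_univ y) ha hb hab
    have h2 := hu ((1 - t) • x + t • y)
    have hz : ((1 - t) • x + t • y) - x = t • (y - x) := by module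
    rw [hz, real_inner_smul_right] at h2
    have hxy : ‖x - y‖ = ‖y - x‖ := norm_sub_rev x y
    simp only [smul_eq_mul, hxy] at h1
    have h3 := h2.trans h1
    nlinarith [ht.1, sq_nonneg (‖y - x‖)]
  have htend : Filter.Tendsto
      (fun t : ℝ => ⟪u, y - x⟫ + ρ / 2 * ‖y - x‖ ^ 2 - t * (ρ / 2 * ‖y - x‖ ^ 2))
      (𝓝[>] (0:ℝ)) (𝓝 (⟪u, y - x⟫ + ρ / 2 * ‖y - x‖ ^ 2)) := by
    have hc : Continuous
        (fun t : ℝ => ⟪u, y - x⟫ + ρ / 2 * ‖y - x‖ ^ 2 - t * (ρ / 2 * ‖y - x‖ ^ 2)) := by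
      continuity
    have := (hc.tendsto 0).mono_left (nhdsWithin_le_nhds : 𝓝[>] (0:ℝ) ≤ 𝓝 0)
    simpa using this
  have hev : ∀ᶠ t in 𝓝[>] (0:ℝ),
      ⟪u, y - x⟫ + ρ / 2 * ‖y - x‖ ^ 2 - t * (ρ / 2 * ‖y - x‖ ^ 2) ≤ f y - f x := by
    filter_upwards [Ioo_mem_nhdsGT_of_mem (by norm_num : (0:ℝ) ∈ Set.Ico (0:ℝ) 1)] with t ht
      using key t ht
  have := le_of_tendsto htend hev
  linarith

/-- Strengthened gradient inequality for differentiable strongly convex functions. -/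
lemma grad_strong_aux {m : ℕ} (f : EuclideanSpace ℝ (Fin m) → ℝ) (ρ : ℝ)
    (hf : ConvexOn ℝ Set.univ fun z => f z - ρ / 2 * ‖z‖ ^ 2)
    (hdiff : Differentiable ℝ f) (x y : EuclideanSpace ℝ (Fin m)) :
    f y + ⟪gradient f y, x - y⟫ + ρ / 2 * ‖x - y‖ ^ 2 ≤ f x := by
  have hsf : StrongConvexOn Set.univ ρ f := strongConvexOn_iff_convex.mpr hf
  set q : ℝ → ℝ := fun t => f (y + t • (x - y)) with hq
  have hderiv : HasDerivAt q ⟪gradient f y, x - y⟫ 0 := by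
    have hc : HasDerivAt (fun t : ℝ => y + t • (x - y)) (x - y) 0 := by
      simpa using ((hasDerivAt_id (0:ℝ)).smul_const (x - y)).const_add y
    have hfd : fderiv ℝ f y = InnerProductSpace.toDual ℝ _ (gradient f y) :=
      ((hdiff y).hasGradientAt.hasFDerivAt).fderiv
    have hF : HasFDerivAt f (fderiv ℝ f y) (y + (0:ℝ) • (x - y)) := by
      simpa using (hdiff y).hasFDerivAt
    have hcomp := hF.comp_hasDerivAt 0 hc
    rw [hfd] at hcomp
    simpa only [Function.comp_def, zero_smul, add_zero, InnerProductSpace.toDual_apply_apply] using hcomp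
  have hslope := hasDerivAt_iff_tendsto_slope.mp hderiv
  have hslope' : Filter.Tendsto (slope q 0) (𝓝[>] (0:ℝ)) (𝓝 ⟪gradient f y, x - y⟫) :=
    hslope.mono_left (nhdsWithin_mono 0 (fun t ht => by
      simp only [Set.mem_Ioi] at ht; simp [Set.mem_compl_iff, ne_of_gt ht]))
  have htend : Filter.Tendsto
      (fun t : ℝ => slope q 0 t + (1 - t) * (ρ / 2 * ‖x - y‖ ^ 2))
      (𝓝[>] (0:ℝ)) (𝓝 (⟪gradient f y, x - y⟫ + ρ / 2 * ‖x - y‖ ^ 2)) := by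
    have h2 : Filter.Tendsto (fun t : ℝ => (1 - t) * (ρ / 2 * ‖x - y‖ ^ 2))
        (𝓝[>] (0:ℝ)) (𝓝 (ρ / 2 * ‖x - y‖ ^ 2)) := by
      have hc : Continuous (fun t : ℝ => (1 - t) * (ρ / 2 * ‖x - y‖ ^ 2)) := by continuity
      have := (hc.tendsto 0).mono_left (nhdsWithin_le_nhds : 𝓝[>] (0:ℝ) ≤ 𝓝 0)
      simpa using this
    exact hslope'.add h2
  have hev : ∀ᶠ t in 𝓝[>] (0:ℝ),
      slope q 0 t + (1 - t) * (ρ / 2 * ‖x - y‖ ^ 2) ≤ f x - f y := by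
    filter_upwards [Ioo_mem_nhdsGT_of_mem (by norm_num : (0:ℝ) ∈ Set.Ico (0:ℝ) 1)] with t ht
    have ha : (0:ℝ) ≤ 1 - t := by linarith [ht.2]
    have hb : (0:ℝ) ≤ t := le_of_lt ht.1
    have hab : (1 - t) + t = 1 := by ring
    have h1 := hsf.2 (Set.mem_univ y) (Set.mem_univ x) ha hb hab
    have hzy : (1 - t) • y + t • x = y + t • (x - y) := by module
    rw [hzy] at h1
    simp only [smul_eq_mul, norm_sub_rev y x] at h1
    have hq0 : q 0 = f y := by simp [hq]
    have hslope_eq : slope q 0 t = (q t - f y) / t := by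
      rw [slope_def_field, hq0]; ring_nf
    rw [hslope_eq]
    rw [div_add' _ _ _ (ne_of_gt ht.1), div_le_iff₀ ht.1]
    simp only [hq]
    nlinarith [ht.1]
  have := le_of_tendsto htend hev
  linarith

theorem stmt0 {m : ℕ} (g h : EuclideanSpace ℝ (Fin m) → ℝ) (ρ : ℝ) (hρ : 0 < ρ)
    (hg : ConvexOn ℝ Set.univ fun z => g z - ρ / 2 * ‖z‖ ^ 2)
    (hh : ConvexOn ℝ Set.univ fun z => h z - ρ / 2 * ‖z‖ ^ 2)
    (hgdiff : Differentiable ℝ g)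
    (φ : EuclideanSpace ℝ (Fin m) → ℝ) (hφ : φ = fun z => g z - h z)
    (x y : EuclideanSpace ℝ (Fin m))
    (hxy : gradient g y ∈ subdiff h x) :
    φ y ≤ φ x - ρ * ‖y - x‖ ^ 2 := by
  have H1 := subgrad_strong_aux h ρ hh (gradient g y) x y hxy
  have H2 := grad_strong_aux g ρ hg hgdiff x y
  have hxy' : ⟪gradient g y, x - y⟫ = -⟪gradient g y, y - x⟫ := by
    rw [← inner_neg_right]; congr 1; abel
  have hnorm : ‖x - y‖ = ‖y - x‖ := norm_sub_rev x y
  rw [hxy', hnorm] at H2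
  subst hφ
  simp only
  linarith
end

section
/- Let g, h : ℝ^m → ℝ be strongly convex with modulus ρ > 0, with g differentiable, and set φ := g − h. If x, y ∈ ℝ^m satisfy ∇g(y) ∈ ∂h(x) and d := y − x, then the one-sided directional derivative φ'(y; d) := lim_{t↓0} (φ(y + t d) − φ(y))/t exists and satisfies φ'(y; d) ≤ −ρ‖d‖². -/
open scoped RealInnerProductSpace
open Filter Topology

set_option maxHeartbeats 1000000 in
theorem stmt1 {m : ℕ} (g h : EuclideanSpace ℝ (Fin m) → ℝ) (ρ : ℝ) (hρ : 0 < ρ)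
    (hg : ConvexOn ℝ Set.univ fun z => g z - ρ / 2 * ‖z‖ ^ 2)
    (hh : ConvexOn ℝ Set.univ fun z => h z - ρ / 2 * ‖z‖ ^ 2)
    (hgdiff : Differentiable ℝ g)
    (φ : EuclideanSpace ℝ (Fin m) → ℝ) (hφ : φ = fun z => g z - h z)
    (x y d : EuclideanSpace ℝ (Fin m)) (hd : d = y - x)
    (hxy : gradient g y ∈ subdiff h x) :
    ∃ L : ℝ, Tendsto (fun t : ℝ => (φ (y + t • d) - φ y) / t) (𝓝[>] 0) (𝓝 L) ∧
      L ≤ -ρ * ‖d‖ ^ 2 := by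
  set u := gradient g y with hu
  have hyd : y = x + d := by rw [hd]; abel
  -- norm expansion helper
  have hnorm : ∀ (z : EuclideanSpace ℝ (Fin m)) (s : ℝ),
      ‖z + s • d‖ ^ 2 = ‖z‖ ^ 2 + 2 * s * ⟪z, d⟫ + s ^ 2 * ‖d‖ ^ 2 := by
    intro z s
    rw [norm_add_sq_real, real_inner_smul_right, norm_smul]
    simp [mul_pow]
    ring
  -- Step B: strong subgradient inequality of h at x with subgradient u
  have key : ⟪u, d⟫ + ρ / 2 * ‖d‖ ^ 2 ≤ h y - h x := by
    have hev : ∀ s ∈ Set.Ioo (0:ℝ) 1,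
        ⟪u, d⟫ ≤ h y - h x + ρ / 2 * (s - 1) * ‖d‖ ^ 2 := by
      intro s hs
      obtain ⟨hs0, hs1⟩ := hs
      have h1 : h x + ⟪u, (x + s • d) - x⟫ ≤ h (x + s • d) := hxy (x + s • d)
      have h1' : h x + s * ⟪u, d⟫ ≤ h (x + s • d) := by
        have : (x + s • d) - x = s • d := by abel
        rwa [this, real_inner_smul_right] at h1
      have h2 := hh.2 (Set.mem_univ x) (Set.mem_univ y)
        (by linarith : (0:ℝ) ≤ 1 - s) (le_of_lt hs0) (by ring)
      have hcomb : (1 - s) • x + s • y = x + s • d := by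
        rw [hyd]; module
      rw [hcomb] at h2
      simp only [smul_eq_mul] at h2
      have hn1 : ‖x + s • d‖ ^ 2 = ‖x‖ ^ 2 + 2 * s * ⟪x, d⟫ + s ^ 2 * ‖d‖ ^ 2 := hnorm x s
      have hn2 : ‖y‖ ^ 2 = ‖x‖ ^ 2 + 2 * ⟪x, d⟫ + ‖d‖ ^ 2 := by
        rw [hyd]; simpa using hnorm x 1
      rw [hn1, hn2] at h2
      have hmul : s * ⟪u, d⟫ ≤ s * (h y - h x + ρ / 2 * (s - 1) * ‖d‖ ^ 2) := by
        nlinarith [h1', h2]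
      exact le_of_mul_le_mul_left hmul hs0
    have htend : Tendsto (fun s : ℝ => h y - h x + ρ / 2 * (s - 1) * ‖d‖ ^ 2)
        (𝓝[>] (0:ℝ)) (𝓝 (h y - h x + ρ / 2 * (0 - 1) * ‖d‖ ^ 2)) := by
      apply Tendsto.mono_left _ nhdsWithin_le_nhds
      exact (tendsto_const_nhds.add (((tendsto_id.sub tendsto_const_nhds).const_mul
        (ρ / 2)).mul_const (‖d‖ ^ 2)))
    have hle : ⟪u, d⟫ ≤ h y - h x + ρ / 2 * (0 - 1) * ‖d‖ ^ 2 := by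
      refine ge_of_tendsto htend ?_
      filter_upwards [Ioo_mem_nhdsGT_of_mem (by norm_num : (0:ℝ) ∈ Set.Ico 0 1)] with s hs
      exact hev s hs
    linarith
  -- Step A: lower bound for difference quotient of h
  have hbound : ∀ t ∈ Set.Ioi (0:ℝ),
      ⟪u, d⟫ + ρ * ‖d‖ ^ 2 ≤ (h (y + t • d) - h y) / t := by
    intro t ht
    have ht0 : (0:ℝ) < t := ht
    have ht1 : (0:ℝ) < 1 + t := by linarith
    have h2 := hh.2 (Set.mem_univ (y + t • d)) (Set.mem_univ x)
      (by positivity : (0:ℝ) ≤ 1 / (1 + t)) (by positivity : (0:ℝ) ≤ t / (1 + t))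
      (by field_simp)
    have hcomb : (1 / (1 + t)) • (y + t • d) + (t / (1 + t)) • x = y := by
      rw [hyd]
      match_scalars <;> field_simp
    rw [hcomb] at h2
    simp only [smul_eq_mul] at h2
    have h2' : (1 + t) * (h y - ρ / 2 * ‖y‖ ^ 2) ≤
        (h (y + t • d) - ρ / 2 * ‖y + t • d‖ ^ 2) + t * (h x - ρ / 2 * ‖x‖ ^ 2) := by
      have h3 := mul_le_mul_of_nonneg_left h2 ht1.le
      have e : (1 + t) * (1 / (1 + t) * (h (y + t • d) - ρ / 2 * ‖y + t • d‖ ^ 2)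
          + t / (1 + t) * (h x - ρ / 2 * ‖x‖ ^ 2))
          = (h (y + t • d) - ρ / 2 * ‖y + t • d‖ ^ 2) + t * (h x - ρ / 2 * ‖x‖ ^ 2) := by
        field_simp
      rw [e] at h3
      linarith
    have hn1 : ‖y + t • d‖ ^ 2 = ‖y‖ ^ 2 + 2 * t * ⟪y, d⟫ + t ^ 2 * ‖d‖ ^ 2 := hnorm y t
    have hn2 : ‖y‖ ^ 2 = ‖x‖ ^ 2 + 2 * ⟪x, d⟫ + ‖d‖ ^ 2 := by
      rw [hyd]; simpa using hnorm x 1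
    have hyd' : ⟪y, d⟫ = ⟪x, d⟫ + ‖d‖ ^ 2 := by
      rw [hyd, inner_add_left, real_inner_self_eq_norm_sq]
    rw [hn1, hn2, hyd'] at h2'
    rw [le_div_iff₀ ht0]
    have hkey' := mul_le_mul_of_nonneg_left key ht0.le
    have hpos : 0 ≤ ρ * (t ^ 2 * ‖d‖ ^ 2) := by positivity
    linarith [h2', hkey', hpos]
  -- convexity of h
  have hsq : ConvexOn ℝ Set.univ fun z : EuclideanSpace ℝ (Fin m) => ρ / 2 * ‖z‖ ^ 2 := by
    have h1 : ConvexOn ℝ Set.univ fun z : EuclideanSpace ℝ (Fin m) => ‖z‖ ^ 2 := by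
      refine ⟨convex_univ, fun z _ w _ a b ha hb hab => ?_⟩
      simp only [smul_eq_mul]
      have e : ‖a • z + b • w‖ ^ 2
          = a ^ 2 * ‖z‖ ^ 2 + 2 * (a * b) * ⟪z, w⟫ + b ^ 2 * ‖w‖ ^ 2 := by
        rw [norm_add_sq_real, norm_smul, norm_smul, real_inner_smul_left,
          real_inner_smul_right]
        simp [mul_pow, sq_abs]
        ring
      rw [e]
      nlinarith [mul_nonneg ha hb, norm_sub_sq_real z w, sq_nonneg ‖z - w‖]
    simpa [smul_eq_mul] using h1.smul (by positivity : (0:ℝ) ≤ ρ / 2)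
  have hconv : ConvexOn ℝ Set.univ h := by
    have h3 := hh.add hsq
    have e : ((fun z => h z - ρ / 2 * ‖z‖ ^ 2) + fun z => ρ / 2 * ‖z‖ ^ 2) = h := by
      funext z; simp only [Pi.add_apply]; ring
    rwa [e] at h3
  -- the affine composition t ↦ h (y + t • d) is convex
  have hk : ConvexOn ℝ Set.univ fun t : ℝ => h (y + t • d) := by
    have := hconv.comp_affineMap (AffineMap.lineMap y (y + d))
    have e : (h ∘ ⇑(AffineMap.lineMap y (y + d))) = fun t : ℝ => h (y + t • d) := by
      funext t
      simp only [Function.comp, AffineMap.lineMap_apply, vsub_eq_sub, vadd_eq_add,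
        add_sub_cancel_left]
      exact congrArg h (add_comm _ _)
    rwa [Set.preimage_univ, e] at this
  -- difference quotient of h is monotone on (0, ∞)
  set q : ℝ → ℝ := fun t => (h (y + t • d) - h y) / t with hq
  have hqmono : MonotoneOn q (Set.Ioi 0) := by
    intro s hs t ht hst
    have := hk.secant_mono (Set.mem_univ 0) (Set.mem_univ s) (Set.mem_univ t)
      (ne_of_gt hs) (ne_of_gt ht) hst
    simpa [hq, zero_smul] using this
  have hqbdd : BddBelow (q '' Set.Ioi 0) :=
    ⟨⟪u, d⟫ + ρ * ‖d‖ ^ 2, fun z ⟨t, ht, hz⟩ => hz ▸ hbound t ht⟩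
  have hH : Tendsto q (𝓝[>] 0) (𝓝 (sInf (q '' Set.Ioi 0))) :=
    hqmono.tendsto_nhdsGT hqbdd
  set H := sInf (q '' Set.Ioi 0) with hHdef
  have hHge : ⟪u, d⟫ + ρ * ‖d‖ ^ 2 ≤ H :=
    le_csInf ⟨q 1, 1, Set.mem_Ioi.mpr one_pos, rfl⟩ fun z ⟨t, ht, hz⟩ => hz ▸ hbound t ht
  -- difference quotient of g tends to ⟪u, d⟫
  have hG : Tendsto (fun t : ℝ => (g (y + t • d) - g y) / t) (𝓝[>] 0) (𝓝 ⟪u, d⟫) := by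
    have hgrad : HasFDerivAt g (InnerProductSpace.toDual ℝ _ u) y :=
      ((hgdiff y).hasGradientAt).hasFDerivAt
    have hc : HasDerivAt (fun t : ℝ => y + t • d) d 0 := by
      simpa using ((hasDerivAt_id (0:ℝ)).smul_const d).const_add y
    have hgrad' : HasFDerivAt g (InnerProductSpace.toDual ℝ _ u) (y + (0:ℝ) • d) := by
      simpa using hgrad
    have hcomp : HasDerivAt (fun t : ℝ => g (y + t • d))
        (InnerProductSpace.toDual ℝ _ u d) 0 := hgrad'.comp_hasDerivAt 0 hc
    rw [InnerProductSpace.toDual_apply_apply] at hcomp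
    have := hasDerivAt_iff_tendsto_slope.mp hcomp
    have hmono : 𝓝[>] (0:ℝ) ≤ 𝓝[≠] (0:ℝ) :=
      nhdsWithin_mono 0 fun t ht => ne_of_gt ht
    have := this.mono_left hmono
    refine this.congr' ?_
    filter_upwards [self_mem_nhdsWithin] with t ht
    simp [slope_def_field, div_eq_inv_mul]
  refine ⟨⟪u, d⟫ - H, ?_, ?_⟩
  · have : Tendsto (fun t : ℝ => (g (y + t • d) - g y) / t - q t) (𝓝[>] 0)
        (𝓝 (⟪u, d⟫ - H)) := hG.sub hH
    refine this.congr fun t => ?_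
    simp only [hq, hφ]
    rw [← sub_div]
    ring_nf
  · nlinarith [hHge]
end

section
/- Let g, h : ℝ^m → ℝ be strongly convex with modulus ρ > 0, with g differentiable, and set φ := g − h. Fix α > 0. If x, y ∈ ℝ^m satisfy ∇g(y) ∈ ∂h(x) and d := y − x, then there exists δ > 0 such that φ(y + λ d) ≤ φ(y) − α λ² ‖d‖² for all λ ∈ [0, δ]; in particular the backtracking line search of BDCA (repeatedly multiplying a trial step by β ∈ (0,1) until the inequality holds) terminates after finitely many steps. -/
open scoped RealInnerProductSpace
open Filter Topology

/-- An asymptotic subgradient of a convex function at `0` is a true subgradient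
(evaluated at the point `1`). -/
lemma aux_subgrad (ψ : ℝ → ℝ) (hψ : ConvexOn ℝ Set.univ ψ) (c K : ℝ) (hK : 0 ≤ K)
    (hlow : ∀ t : ℝ, ψ 0 + c * t - K * t ^ 2 ≤ ψ t) : ψ 0 + c ≤ ψ 1 := by
  refine le_of_forall_pos_le_add fun ε hε => ?_
  set s : ℝ := min 1 (ε / (K + 1)) with hs
  have hK1 : (0:ℝ) < K + 1 := by linarith
  have hs0 : 0 < s := lt_min one_pos (div_pos hε hK1)
  have hs1 : s ≤ 1 := min_le_left _ _
  have hconv : ψ ((1-s) • (0:ℝ) + s • 1) ≤ (1-s) • ψ 0 + s • ψ 1 :=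
    hψ.2 (Set.mem_univ _) (Set.mem_univ _) (by linarith) hs0.le (by ring)
  simp only [smul_eq_mul, mul_zero, mul_one, zero_add] at hconv
  have hlow' := hlow s
  have hKs : K * s ≤ ε := by
    have h1 : K * s ≤ K * (ε / (K + 1)) := by
      apply mul_le_mul_of_nonneg_left (min_le_right _ _) hK
    have h2 : K * (ε / (K + 1)) ≤ ε := by
      rw [mul_div_assoc', div_le_iff₀ hK1]
      nlinarith
    linarith
  nlinarith [hlow']

set_option maxHeartbeats 1000000 in
theorem stmt2 {m : ℕ} (g h : EuclideanSpace ℝ (Fin m) → ℝ) (ρ : ℝ) (hρ : 0 < ρ)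
    (hg : ConvexOn ℝ Set.univ fun z => g z - ρ / 2 * ‖z‖ ^ 2)
    (hh : ConvexOn ℝ Set.univ fun z => h z - ρ / 2 * ‖z‖ ^ 2)
    (hgdiff : Differentiable ℝ g)
    (φ : EuclideanSpace ℝ (Fin m) → ℝ) (hφ : φ = fun z => g z - h z)
    (α : ℝ) (hα : 0 < α)
    (x y d : EuclideanSpace ℝ (Fin m)) (hd : d = y - x)
    (hxy : gradient g y ∈ subdiff h x) :
    ∃ δ > (0 : ℝ),
      (∀ lam ∈ Set.Icc (0 : ℝ) δ, φ (y + lam • d) ≤ φ y - α * lam ^ 2 * ‖d‖ ^ 2) ∧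
      -- in particular, the backtracking line search of BDCA terminates finitely:
      ∀ lam0 : ℝ, 0 ≤ lam0 → ∀ β ∈ Set.Ioo (0 : ℝ) 1,
        ∃ n : ℕ, φ (y + (β ^ n * lam0) • d) ≤ φ y - α * (β ^ n * lam0) ^ 2 * ‖d‖ ^ 2 := by
  by_cases hd0 : d = 0
  · refine ⟨1, one_pos, ?_, ?_⟩
    · intro lam _
      simp [hd0, hφ]
    · intro lam0 _ β _
      exact ⟨0, by simp [hd0, hφ]⟩
  -- main case : d ≠ 0
  set u : EuclideanSpace ℝ (Fin m) := gradient g y with hu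
  have ndpos : 0 < ‖d‖ ^ 2 := pow_pos (norm_pos_iff.mpr hd0) 2
  -- expansion of the norm along the line
  have expand : ∀ t : ℝ, ‖x + t • d‖ ^ 2 = ‖x‖ ^ 2 + 2 * (t * ⟪x, d⟫) + t ^ 2 * ‖d‖ ^ 2 := by
    intro t
    rw [norm_add_sq_real, real_inner_smul_right, norm_smul, mul_pow]
    simp [Real.norm_eq_abs, sq_abs]
  -- the restriction of h - ρ/2‖·‖² to the line through x with direction d
  have expandy : ∀ t : ℝ, ‖y + t • d‖ ^ 2 = ‖y‖ ^ 2 + 2 * (t * ⟪y, d⟫) + t ^ 2 * ‖d‖ ^ 2 := by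
    intro t
    rw [norm_add_sq_real, real_inner_smul_right, norm_smul, mul_pow]
    simp [Real.norm_eq_abs, sq_abs]
  set ψ : ℝ → ℝ := fun t => h (x + t • d) - ρ / 2 * ‖x + t • d‖ ^ 2 with hψdef
  have hψconv : ConvexOn ℝ Set.univ ψ := by
    refine ⟨convex_univ, fun p _ q _ a b ha hb hab => ?_⟩
    have hpoint : x + (a • p + b • q) • d = a • (x + p • d) + b • (x + q • d) := by
      have h1 : a • (x + p • d) + b • (x + q • d) = (a + b) • x + (a * p + b * q) • d := by
        module
      rw [h1, hab, one_smul]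
      simp [smul_eq_mul]
    have h2 := hh.2 (Set.mem_univ (x + p • d)) (Set.mem_univ (x + q • d)) ha hb hab
    rw [← hpoint] at h2
    simpa [hψdef, smul_eq_mul] using h2
  have hx0 : x + (0:ℝ) • d = x := by simp
  have hy1 : x + (1:ℝ) • d = y := by rw [hd]; module
  set c : ℝ := ⟪u, d⟫ - ρ * ⟪x, d⟫ with hc
  -- asymptotic subgradient inequality for ψ at 0
  have hlow : ∀ t : ℝ, ψ 0 + c * t - (ρ / 2 * ‖d‖ ^ 2) * t ^ 2 ≤ ψ t := by
    intro t
    have hsub := hxy (x + t • d)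
    have hip : ⟪u, (x + t • d) - x⟫ = t * ⟪u, d⟫ := by
      rw [add_sub_cancel_left, real_inner_smul_right]
    rw [hip] at hsub
    simp only [hψdef, hx0, expand t, hc]
    nlinarith [hsub]
  have hsub1 : ψ 0 + c ≤ ψ 1 :=
    aux_subgrad ψ hψconv c (ρ / 2 * ‖d‖ ^ 2) (by positivity) hlow
  -- slope monotonicity : ψ(1+lam) ≥ ψ 1 + lam * c for lam ≥ 0
  have hslope : ∀ lam : ℝ, 0 ≤ lam → ψ 1 + lam * c ≤ ψ (1 + lam) := by
    intro lam hlam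
    rcases eq_or_lt_of_le hlam with rfl | hlam'
    · simp
    · have h1l : (0:ℝ) < 1 + lam := by linarith
      have hconv : ψ ((lam/(1+lam)) • (0:ℝ) + (1/(1+lam)) • (1+lam)) ≤
          (lam/(1+lam)) • ψ 0 + (1/(1+lam)) • ψ (1+lam) :=
        hψconv.2 (Set.mem_univ _) (Set.mem_univ _) (by positivity) (by positivity)
          (by field_simp <;> ring)
      have hpt : (lam/(1+lam)) • (0:ℝ) + (1/(1+lam)) • (1+lam) = 1 := by
        simp only [smul_eq_mul, mul_zero, zero_add]; exact one_div_mul_cancel (ne_of_gt h1l)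
      rw [hpt] at hconv
      simp only [smul_eq_mul] at hconv
      have := mul_le_mul_of_nonneg_left hconv h1l.le
      have hne : (1+lam) ≠ 0 := ne_of_gt h1l
      field_simp at this
      nlinarith [hsub1]
  -- key inequality for h at y
  have hineq : ∀ lam : ℝ, 0 ≤ lam →
      h y + lam * ⟪u, d⟫ + ρ * lam * ‖d‖ ^ 2 ≤ h (y + lam • d) := by
    intro lam hlam
    have hs := hslope lam hlam
    have hpt : x + (1 + lam) • d = y + lam • d := by rw [hd]; module
    have hyd : ⟪x, d⟫ = ⟪y, d⟫ - ‖d‖ ^ 2 := by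
      rw [hd]
      rw [← real_inner_self_eq_norm_sq]
      rw [inner_sub_left]
      ring
    simp only [hψdef, hpt, hy1, hc] at hs
    rw [hyd, expandy lam] at hs
    nlinarith [hs, mul_nonneg (mul_nonneg hρ.le (sq_nonneg lam)) ndpos.le]
  -- derivative of g along the line at lam = 0
  set f : ℝ → ℝ := fun lam => g (y + lam • d) with hf
  have hderiv : HasDerivAt f ⟪u, d⟫ 0 := by
    have h1 : HasDerivAt (fun lam : ℝ => y + lam • d) d 0 := by
      simpa using ((hasDerivAt_id (0:ℝ)).smul_const d).const_add y
    have h2 : HasFDerivAt g (InnerProductSpace.toDual ℝ _ u) y :=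
      ((hgdiff y).hasGradientAt).hasFDerivAt
    have h2' : HasFDerivAt g (InnerProductSpace.toDual ℝ _ u) ((fun lam : ℝ => y + lam • d) 0) := by
      simpa using h2
    have h3 := h2'.comp_hasDerivAt 0 h1
    exact (by simpa [InnerProductSpace.toDual_apply_apply] using h3 :
      HasDerivAt (g ∘ fun lam : ℝ => y + lam • d) ⟪u, d⟫ 0)
  have htend : Tendsto (slope f 0) (𝓝[>] 0) (𝓝 ⟪u, d⟫) :=
    (hasDerivAt_iff_tendsto_slope.1 hderiv).mono_left
      (nhdsWithin_mono 0 fun t ht => ne_of_gt ht)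
  have hev : ∀ᶠ lam in 𝓝[>] (0:ℝ), slope f 0 lam < ⟪u, d⟫ + ρ / 2 * ‖d‖ ^ 2 :=
    htend.eventually_lt_const (by nlinarith)
  obtain ⟨δ1, hδ1mem, hδ1sub⟩ := mem_nhdsGT_iff_exists_Ioc_subset.1 hev
  have hδ1pos : (0:ℝ) < δ1 := by simpa using hδ1mem
  set δ : ℝ := min δ1 (ρ / (2 * α)) with hδdef
  have hδpos : 0 < δ := lt_min hδ1pos (by positivity)
  have key : ∀ lam ∈ Set.Icc (0:ℝ) δ, φ (y + lam • d) ≤ φ y - α * lam ^ 2 * ‖d‖ ^ 2 := by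
    rintro lam ⟨hl0, hlδ⟩
    rcases eq_or_lt_of_le hl0 with rfl | hlpos
    · simp [hφ]
    · have hmem : lam ∈ Set.Ioc (0:ℝ) δ1 := ⟨hlpos, le_trans hlδ (min_le_left _ _)⟩
      have hsl := hδ1sub hmem
      simp only [Set.mem_setOf_eq] at hsl
      rw [slope_def_field, sub_zero] at hsl
      have hf0 : f 0 = g y := by simp [hf]
      have hglam : f lam < g y + lam * (⟪u, d⟫ + ρ / 2 * ‖d‖ ^ 2) := by
        rw [div_lt_iff₀ hlpos] at hsl
        rw [hf0] at hsl
        nlinarith [hsl]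
      have hh' := hineq lam hl0
      have hlρ : α * lam ≤ ρ / 2 := by
        have : lam ≤ ρ / (2 * α) := le_trans hlδ (min_le_right _ _)
        rw [le_div_iff₀ (by positivity)] at this
        linarith
      simp only [hφ, hf] at hglam hh' ⊢
      nlinarith [mul_le_mul_of_nonneg_right hlρ (mul_nonneg hl0 ndpos.le)]
  refine ⟨δ, hδpos, key, ?_⟩
  intro lam0 hlam0 β hβ
  obtain ⟨hβ0, hβ1⟩ := hβ
  have htend2 : Tendsto (fun n : ℕ => β ^ n * lam0) atTop (𝓝 0) := by
    simpa using (tendsto_pow_atTop_nhds_zero_of_lt_one hβ0.le hβ1).mul_const lam0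
  obtain ⟨n, hn⟩ := (htend2.eventually_lt_const hδpos).exists
  exact ⟨n, key _ ⟨mul_nonneg (pow_nonneg hβ0.le n) hlam0, hn.le⟩⟩
end

section
/- Let g, h : ℝ^m → ℝ be strongly convex with modulus ρ > 0, with g differentiable, and set φ := g − h. Fix α > 0. Suppose x, y ∈ ℝ^m satisfy ∇g(y) ∈ ∂h(x), d := y − x, and λ ≥ 0 satisfies φ(y + λ d) ≤ φ(y) − α λ² ‖d‖². Then φ(y + λ d) ≤ φ(x) − (α λ² + ρ)‖d‖²; in particular each BDCA iteration decreases the objective value at least as much as the corresponding DCA iteration. -/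
open scoped RealInnerProductSpace
open Filter Topology

section aux
variable {m : ℕ}

lemma core_aux (f : EuclideanSpace ℝ (Fin m) → ℝ) (ρ : ℝ)
    (hf : ConvexOn ℝ Set.univ fun z => f z - ρ / 2 * ‖z‖ ^ 2)
    (x y : EuclideanSpace ℝ (Fin m)) {t : ℝ} (ht0 : 0 < t) (ht1 : t ≤ 1) :
    f (x + t • (y - x)) - f x ≤ t * (f y - f x - ρ / 2 * (1 - t) * ‖y - x‖ ^ 2) := by
  have h1 := hf.2 (Set.mem_univ x) (Set.mem_univ y)
    (show (0:ℝ) ≤ 1 - t by linarith) ht0.le (by ring)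
  have hpt : (1 - t) • x + t • y = x + t • (y - x) := by module
  rw [hpt] at h1
  simp only [smul_eq_mul] at h1
  have hn1 : ‖x + t • (y - x)‖ ^ 2 = ‖x‖ ^ 2 + 2 * (t * ⟪x, y - x⟫) + t ^ 2 * ‖y - x‖ ^ 2 := by
    rw [norm_add_sq_real, real_inner_smul_right, norm_smul, Real.norm_eq_abs, mul_pow, sq_abs]
  have hn2 : ‖y‖ ^ 2 = ‖x‖ ^ 2 + 2 * ⟪x, y - x⟫ + ‖y - x‖ ^ 2 := by
    have := norm_add_sq_real x (y - x)
    simpa using this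
  rw [hn1, hn2] at h1
  nlinarith [h1]

lemma tendsto_rhs (c e : ℝ) :
    Tendsto (fun t : ℝ => c - e * (1 - t)) (𝓝[>] 0) (𝓝 (c - e)) := by
  have : ContinuousAt (fun t : ℝ => c - e * (1 - t)) 0 := by fun_prop
  have h := this.tendsto
  simp only [sub_zero, mul_one] at h
  exact h.mono_left nhdsWithin_le_nhds

lemma ev_Ioc : ∀ᶠ t : ℝ in 𝓝[>] 0, t ∈ Set.Ioc (0:ℝ) 1 :=
  Ioc_mem_nhdsGT_of_mem (by constructor <;> norm_num)

-- subgradient strong convexity inequality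
lemma subgrad_strong (f : EuclideanSpace ℝ (Fin m) → ℝ) (ρ : ℝ)
    (hf : ConvexOn ℝ Set.univ fun z => f z - ρ / 2 * ‖z‖ ^ 2)
    (x y u : EuclideanSpace ℝ (Fin m))
    (hu : ∀ z, f x + ⟪u, z - x⟫ ≤ f z) :
    f x + ⟪u, y - x⟫ + ρ / 2 * ‖y - x‖ ^ 2 ≤ f y := by
  have key : ∀ t ∈ Set.Ioc (0:ℝ) 1,
      ⟪u, y - x⟫ ≤ f y - f x - ρ / 2 * ‖y - x‖ ^ 2 * (1 - t) := by
    intro t ht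
    have h1 := core_aux f ρ hf x y ht.1 ht.2
    have h2 := hu (x + t • (y - x))
    rw [add_sub_cancel_left, real_inner_smul_right] at h2
    have h3 : t * ⟪u, y - x⟫ ≤ t * (f y - f x - ρ / 2 * (1 - t) * ‖y - x‖ ^ 2) := by
      linarith
    have h4 := le_of_mul_le_mul_left h3 ht.1
    nlinarith [h4]
  have hT := tendsto_rhs (f y - f x) (ρ / 2 * ‖y - x‖ ^ 2)
  have := ge_of_tendsto hT (ev_Ioc.mono (fun t ht => key t ht))
  linarith

-- gradient strong convexity inequality
lemma grad_strong (f : EuclideanSpace ℝ (Fin m) → ℝ) (ρ : ℝ)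
    (hf : ConvexOn ℝ Set.univ fun z => f z - ρ / 2 * ‖z‖ ^ 2)
    (hfd : Differentiable ℝ f)
    (x y : EuclideanSpace ℝ (Fin m)) :
    f x + ⟪gradient f x, y - x⟫ + ρ / 2 * ‖y - x‖ ^ 2 ≤ f y := by
  -- derivative of t ↦ f (x + t • (y - x)) at 0
  have hline : HasDerivAt (fun t : ℝ => x + t • (y - x)) (y - x) 0 := by
    simpa using ((hasDerivAt_id (0:ℝ)).smul_const (y - x)).const_add x
  have hF : HasFDerivAt f (InnerProductSpace.toDual ℝ _ (gradient f x)) x :=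
    (hfd x).hasGradientAt.hasFDerivAt
  have hcomp : HasDerivAt (fun t : ℝ => f (x + t • (y - x))) ⟪gradient f x, y - x⟫ 0 := by
    have hF' : HasFDerivAt f (InnerProductSpace.toDual ℝ _ (gradient f x))
        (x + (0:ℝ) • (y - x)) := by simpa using hF
    have := hF'.comp_hasDerivAt 0 hline
    rw [InnerProductSpace.toDual_apply_apply] at this; exact this
  have hslope : Tendsto (fun t : ℝ => (f (x + t • (y - x)) - f x) / t) (𝓝[>] 0)
      (𝓝 ⟪gradient f x, y - x⟫) := by
    have := hcomp.hasDerivWithinAt (s := Set.Ioi (0:ℝ))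
    have h2 := (hasDerivWithinAt_iff_tendsto_slope.mp this)
    have h3 : Tendsto (slope (fun t : ℝ => f (x + t • (y - x))) 0) (𝓝[>] 0)
        (𝓝 ⟪gradient f x, y - x⟫) := h2.mono_left (nhdsWithin_mono _ (by
      intro a ha; exact Set.mem_diff_singleton.mpr ⟨ha, ne_of_gt ha⟩))
    refine h3.congr' (ev_Ioc.mono fun t ht => ?_)
    rw [slope_def_field]
    simp
  have hT := tendsto_rhs (f y - f x) (ρ / 2 * ‖y - x‖ ^ 2)
  have hev : ∀ᶠ t : ℝ in 𝓝[>] 0,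
      (f (x + t • (y - x)) - f x) / t ≤ f y - f x - ρ / 2 * ‖y - x‖ ^ 2 * (1 - t) := by
    refine ev_Ioc.mono fun t ht => ?_
    have h1 := core_aux f ρ hf x y ht.1 ht.2
    rw [div_le_iff₀ ht.1]
    nlinarith [h1]
  have := le_of_tendsto_of_tendsto hslope hT hev
  linarith

theorem stmt3 {m : ℕ} (g h : EuclideanSpace ℝ (Fin m) → ℝ) (ρ : ℝ) (hρ : 0 < ρ)
    (hg : ConvexOn ℝ Set.univ fun z => g z - ρ / 2 * ‖z‖ ^ 2)
    (hh : ConvexOn ℝ Set.univ fun z => h z - ρ / 2 * ‖z‖ ^ 2)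
    (hgdiff : Differentiable ℝ g)
    (φ : EuclideanSpace ℝ (Fin m) → ℝ) (hφ : φ = fun z => g z - h z)
    (α : ℝ) (hα : 0 < α)
    (x y d : EuclideanSpace ℝ (Fin m)) (hd : d = y - x)
    (hxy : gradient g y ∈ subdiff h x)
    (lam : ℝ) (hlam : 0 ≤ lam)
    (hls : φ (y + lam • d) ≤ φ y - α * lam ^ 2 * ‖d‖ ^ 2) :
    φ (y + lam • d) ≤ φ x - (α * lam ^ 2 + ρ) * ‖d‖ ^ 2 := by
  have hA := grad_strong g ρ hg hgdiff y x
  have hB := subgrad_strong h ρ hh x y (gradient g y) hxy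
  have hflip : ⟪gradient g y, x - y⟫ = -⟪gradient g y, y - x⟫ := by
    rw [show x - y = -(y - x) by abel, inner_neg_right]
  have hnflip : ‖x - y‖ = ‖y - x‖ := norm_sub_rev x y
  rw [hflip, hnflip] at hA
  have hstep : φ y ≤ φ x - ρ * ‖y - x‖ ^ 2 := by
    rw [hφ]; dsimp only; linarith
  subst hd hφ
  dsimp only at hls hstep ⊢
  nlinarith [hls, hstep]

end aux
end

section
/- Let g, h : ℝ^m → ℝ be strongly convex with modulus ρ > 0, with g continuously differentiable, φ := g − h, and inf_{x∈ℝ^m} φ(x) > −∞. Let {x_k}, {y_k}, {λ_k} be a BDCA sequence (with parameter α > 0). Then the sequence {φ(x_k)} is monotonically decreasing and converges to some φ* ∈ ℝ. -/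
open scoped RealInnerProductSpace
open Filter Topology

/-- Gradient inequality for a differentiable convex function. -/
lemma convex_gradient_ineq {m : ℕ} {g : EuclideanSpace ℝ (Fin m) → ℝ}
    (hg : ConvexOn ℝ Set.univ g) (hg1 : ContDiff ℝ 1 g)
    (a b : EuclideanSpace ℝ (Fin m)) :
    g a + ⟪gradient g a, b - a⟫ ≤ g b := by
  set u := gradient g a with hu
  have hdiff : DifferentiableAt ℝ g a :=
    (hg1.differentiable one_ne_zero).differentiableAt
  have hgrad : HasGradientAt g u a := hdiff.hasGradientAt
  have hfd : HasFDerivAt g (InnerProductSpace.toDual ℝ _ u) a := hgrad.hasFDerivAt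
  -- the line t ↦ a + t • (b - a)
  have hline : HasDerivAt (fun t : ℝ => a + t • (b - a)) (b - a) 0 := by
    simpa using ((hasDerivAt_id (0:ℝ)).smul_const (b - a)).const_add a
  have hfd' : HasFDerivAt g (InnerProductSpace.toDual ℝ _ u) (a + (0:ℝ) • (b - a)) := by
    simpa using hfd
  have hψ : HasDerivAt (fun t : ℝ => g (a + t • (b - a))) ⟪u, b - a⟫ 0 := by
    have := hfd'.comp_hasDerivAt (x := (0:ℝ)) hline
    simp only [InnerProductSpace.toDual_apply_apply] at this
    exact this
  have hψconv : ConvexOn ℝ Set.univ (fun t : ℝ => g (a + t • (b - a))) := by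
    have := hg.comp_affineMap
      (AffineMap.const ℝ ℝ a + (LinearMap.toSpanSingleton ℝ _ (b - a)).toAffineMap)
    have heq : (fun t : ℝ => g (a + t • (b - a))) =
        g ∘ (AffineMap.const ℝ ℝ a + (LinearMap.toSpanSingleton ℝ _ (b - a)).toAffineMap) := by
      funext t
      simp [LinearMap.toSpanSingleton_apply]
    rw [heq]
    simpa using this
  have hle := hψconv.le_slope_of_hasDerivAt (x := (0:ℝ)) (y := (1:ℝ))
    (Set.mem_univ _) (Set.mem_univ _) one_pos hψ
  have hs : slope (fun t : ℝ => g (a + t • (b - a))) 0 1 = g b - g a := by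
    rw [slope_def_field]
    simp
  rw [hs] at hle
  linarith

theorem stmt4 {m : ℕ} (g h : EuclideanSpace ℝ (Fin m) → ℝ) (ρ : ℝ) (hρ : 0 < ρ)
    (hg : ConvexOn ℝ Set.univ fun z => g z - ρ / 2 * ‖z‖ ^ 2)
    (hh : ConvexOn ℝ Set.univ fun z => h z - ρ / 2 * ‖z‖ ^ 2)
    (hg1 : ContDiff ℝ 1 g)
    (φ : EuclideanSpace ℝ (Fin m) → ℝ) (hφ : φ = fun z => g z - h z)
    (hbdd : BddBelow (Set.range φ))
    (α : ℝ) (hα : 0 < α)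
    (x y : ℕ → EuclideanSpace ℝ (Fin m)) (lam : ℕ → ℝ)
    (hlam : ∀ k, 0 ≤ lam k)
    (hsub : ∀ k, gradient g (y k) ∈ subdiff h (x k))
    (hdesc : ∀ k, φ (y k + lam k • (y k - x k)) ≤ φ (y k) - α * lam k ^ 2 * ‖y k - x k‖ ^ 2)
    (hnext : ∀ k, x (k + 1) = y k + lam k • (y k - x k)) :
    Antitone (fun k => φ (x k)) ∧ ∃ φstar : ℝ, Tendsto (fun k => φ (x k)) atTop (𝓝 φstar) := by
  -- g is convex
  have hsq : ConvexOn ℝ Set.univ (fun z : EuclideanSpace ℝ (Fin m) => ρ / 2 * ‖z‖ ^ 2) := by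
    have h1 : ConvexOn ℝ Set.univ (fun z : EuclideanSpace ℝ (Fin m) => ‖z‖ ^ 2) := by
      refine ⟨convex_univ, fun p _ q _ a b ha hb hab => ?_⟩
      simp only [smul_eq_mul]
      have hn : ‖a • p + b • q‖ ≤ a * ‖p‖ + b * ‖q‖ := by
        calc ‖a • p + b • q‖ ≤ ‖a • p‖ + ‖b • q‖ := norm_add_le _ _
          _ = a * ‖p‖ + b * ‖q‖ := by
              rw [norm_smul, norm_smul, Real.norm_eq_abs, Real.norm_eq_abs,
                abs_of_nonneg ha, abs_of_nonneg hb]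
      have h2 : ‖a • p + b • q‖ ^ 2 ≤ (a * ‖p‖ + b * ‖q‖) ^ 2 :=
        pow_le_pow_left₀ (norm_nonneg _) hn 2
      nlinarith [sq_nonneg (‖p‖ - ‖q‖), mul_nonneg ha hb, norm_nonneg p, norm_nonneg q]
    have h2 := h1.smul (c := ρ / 2) (by positivity)
    simpa [smul_eq_mul] using h2
  have hgconv : ConvexOn ℝ Set.univ g := by
    have h2 := hg.add hsq
    have he : ((fun z : EuclideanSpace ℝ (Fin m) => g z - ρ / 2 * ‖z‖ ^ 2) +
        fun z => ρ / 2 * ‖z‖ ^ 2) = g := by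
      funext z; simp
    rwa [he] at h2
  -- φ (x (k+1)) ≤ φ (x k)
  have key : ∀ k, φ (x (k + 1)) ≤ φ (x k) := by
    intro k
    have h1 : h (x k) + ⟪gradient g (y k), y k - x k⟫ ≤ h (y k) := hsub k (y k)
    have h2 : g (y k) + ⟪gradient g (y k), x k - y k⟫ ≤ g (x k) :=
      convex_gradient_ineq hgconv hg1 (y k) (x k)
    have h3 : ⟪gradient g (y k), x k - y k⟫ = -⟪gradient g (y k), y k - x k⟫ := by
      rw [← inner_neg_right, neg_sub]
    have hy_le : φ (y k) ≤ φ (x k) := by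
      simp only [hφ]; rw [h3] at h2; linarith
    have h4 := hdesc k
    have h5 : 0 ≤ α * lam k ^ 2 * ‖y k - x k‖ ^ 2 := by positivity
    rw [hnext k]
    linarith
  have hanti : Antitone fun k => φ (x k) := antitone_nat_of_succ_le key
  refine ⟨hanti, ⟨⨅ k, φ (x k), tendsto_atTop_ciInf hanti ?_⟩⟩
  obtain ⟨c, hc⟩ := hbdd
  exact ⟨c, fun v ⟨k, hk⟩ => hk ▸ hc ⟨x k, rfl⟩⟩
end

section
/- Let g, h : ℝ^m → ℝ be strongly convex with modulus ρ > 0, with g continuously differentiable, φ := g − h, and inf_{x∈ℝ^m} φ(x) > −∞. Let {x_k}, {y_k}, {λ_k} be a BDCA sequence (with parameter α > 0). Then every limit point x̄ of the sequence {x_k} is a critical point of φ, i.e., ∇g(x̄) ∈ ∂h(x̄). -/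
open scoped RealInnerProductSpace
open Filter Topology

/-- First-order condition for a convex function along a segment. -/
lemma convex_first_order {E : Type*} [NormedAddCommGroup E] [NormedSpace ℝ E]
    {F : E → ℝ} (hF : ConvexOn ℝ Set.univ F) (x y : E) {L : ℝ}
    (hψ : HasDerivAt (fun t : ℝ => F (y + t • (x - y))) L 0) :
    F y + L ≤ F x := by
  set f : ℝ → ℝ := fun t : ℝ => F (y + t • (x - y)) with hf
  have hf0 : f 0 = F y := by simp [hf]
  have key : Filter.Tendsto (slope f 0) (𝓝[>] (0:ℝ)) (𝓝 L) :=
    (hasDerivAt_iff_tendsto_slope.1 hψ).mono_left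
      (nhdsWithin_mono _ fun t ht => ne_of_gt ht)
  have hub : ∀ᶠ t in 𝓝[>] (0:ℝ), slope f 0 t ≤ F x - F y := by
    filter_upwards [Ioc_mem_nhdsGT_of_mem (by simp : (0:ℝ) ∈ Set.Ico (0:ℝ) 1)] with t ht
    have ht0 : 0 < t := ht.1
    have hmem : y + t • (x - y) = (1 - t) • y + t • x := by
      rw [smul_sub, sub_smul, one_smul]; abel
    have hcv : f t ≤ (1 - t) * F y + t * F x := by
      rw [hf]; simp only [hmem]
      exact hF.2 (Set.mem_univ y) (Set.mem_univ x) (by linarith [ht.2]) ht0.le (by ring)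
    rw [slope_def_field, sub_zero, hf0, div_le_iff₀ ht0]
    nlinarith [hcv]
  have := le_of_tendsto key hub
  linarith

/-- First-order condition for strong convexity. -/
lemma strong_first_order {m : ℕ} (g : EuclideanSpace ℝ (Fin m) → ℝ) (ρ : ℝ)
    (hg : ConvexOn ℝ Set.univ fun z => g z - ρ / 2 * ‖z‖ ^ 2)
    (hg1 : ContDiff ℝ 1 g) (x y : EuclideanSpace ℝ (Fin m)) :
    g y + ⟪gradient g y, x - y⟫ + ρ / 2 * ‖x - y‖ ^ 2 ≤ g x := by
  set d := x - y with hd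
  set c : ℝ → EuclideanSpace ℝ (Fin m) := fun t => y + t • d with hc
  have hc0 : c 0 = y := by simp [hc]
  have hcder : HasDerivAt c d 0 := by
    have := ((hasDerivAt_id (0:ℝ)).smul_const d).const_add y
    rw [one_smul] at this; exact this
  have hgd : DifferentiableAt ℝ g y := (hg1.differentiable one_ne_zero).differentiableAt
  have hgrad : HasGradientAt g (gradient g y) y := hgd.hasGradientAt
  have hgF : HasFDerivAt g (InnerProductSpace.toDual ℝ _ (gradient g y)) y :=
    hgrad.hasFDerivAt
  have hgF' : HasFDerivAt g (InnerProductSpace.toDual ℝ _ (gradient g y)) (c 0) := by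
    rw [hc0]; exact hgF
  have h1 : HasDerivAt (fun t => g (c t)) ⟪gradient g y, d⟫ 0 := by
    have := hgF'.comp_hasDerivAt 0 hcder
    simp only [InnerProductSpace.toDual_apply_apply] at this; exact this
  have h2 : HasDerivAt (fun t => ⟪c t, c t⟫) (⟪y, d⟫ + ⟪d, y⟫) 0 := by
    have := HasDerivAt.inner ℝ hcder hcder
    simpa [hc0] using this
  have hψ : HasDerivAt (fun t => g (c t) - ρ / 2 * ⟪c t, c t⟫)
      (⟪gradient g y, d⟫ - ρ / 2 * (⟪y, d⟫ + ⟪d, y⟫)) 0 := h1.sub (h2.const_mul (ρ/2))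
  have hψ' : HasDerivAt (fun t : ℝ => (fun z => g z - ρ / 2 * ‖z‖ ^ 2) (y + t • (x - y)))
      (⟪gradient g y, d⟫ - ρ / 2 * (⟪y, d⟫ + ⟪d, y⟫)) 0 := by
    convert hψ using 2 with t
    rw [real_inner_self_eq_norm_sq]
  have key := convex_first_order hg x y hψ'
  have hyy : ⟪y, y⟫ = ‖y‖ ^ 2 := real_inner_self_eq_norm_sq y
  have hxx : ⟪x, x⟫ = ‖x‖ ^ 2 := real_inner_self_eq_norm_sq x
  have hdd : ⟪d, d⟫ = ‖d‖ ^ 2 := real_inner_self_eq_norm_sq d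
  have hsub : ⟪x - y, x - y⟫ = ⟪x, x⟫ - 2 * ⟪x, y⟫ + ⟪y, y⟫ := real_inner_sub_sub_self x y
  have hyd : ⟪y, d⟫ = ⟪y, x⟫ - ⟪y, y⟫ := by rw [hd, inner_sub_right]
  have hdy : ⟪d, y⟫ = ⟪y, d⟫ := real_inner_comm _ _
  have hxy : ⟪x, y⟫ = ⟪y, x⟫ := real_inner_comm _ _
  rw [← hd] at hsub
  have e : ⟪y, d⟫ + ⟪d, y⟫ = ‖x‖ ^ 2 - ‖y‖ ^ 2 - ‖d‖ ^ 2 := by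
    linarith [hdy, hyd, hsub, hdd, hxx, hyy, hxy]
  rw [e] at key
  linarith

theorem stmt5 {m : ℕ} (g h : EuclideanSpace ℝ (Fin m) → ℝ) (ρ : ℝ) (hρ : 0 < ρ)
    (hg : ConvexOn ℝ Set.univ fun z => g z - ρ / 2 * ‖z‖ ^ 2)
    (hh : ConvexOn ℝ Set.univ fun z => h z - ρ / 2 * ‖z‖ ^ 2)
    (hg1 : ContDiff ℝ 1 g)
    (φ : EuclideanSpace ℝ (Fin m) → ℝ) (hφ : φ = fun z => g z - h z)
    (hbdd : BddBelow (Set.range φ))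
    (α : ℝ) (hα : 0 < α)
    (x y : ℕ → EuclideanSpace ℝ (Fin m)) (lam : ℕ → ℝ)
    (hlam : ∀ k, 0 ≤ lam k)
    (hsub : ∀ k, gradient g (y k) ∈ subdiff h (x k))
    (hdesc : ∀ k, φ (y k + lam k • (y k - x k)) ≤ φ (y k) - α * lam k ^ 2 * ‖y k - x k‖ ^ 2)
    (hnext : ∀ k, x (k + 1) = y k + lam k • (y k - x k))
    (xbar : EuclideanSpace ℝ (Fin m))
    (hcluster : MapClusterPt xbar atTop x) :
    gradient g xbar ∈ subdiff h xbar := by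
  -- Step 1: sufficient decrease
  have step1 : ∀ k, φ (x (k + 1)) ≤ φ (x k) - ρ / 2 * ‖y k - x k‖ ^ 2 := by
    intro k
    have hsg := strong_first_order g ρ hg hg1 (x k) (y k)
    have hsh := hsub k (y k)
    have hdk := hdesc k
    have hpos : 0 ≤ α * lam k ^ 2 * ‖y k - x k‖ ^ 2 := by positivity
    have hflip : ⟪gradient g (y k), x k - y k⟫ = -⟪gradient g (y k), y k - x k⟫ := by
      rw [← inner_neg_right, neg_sub]
    have hnrm : ‖x k - y k‖ = ‖y k - x k‖ := norm_sub_rev _ _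
    rw [hnext k, hφ] at *
    simp only at *
    rw [hflip, hnrm] at hsg
    linarith
  set a : ℕ → ℝ := fun k => φ (x k) with ha
  have hanti : Antitone a := antitone_nat_of_succ_le fun k => by
    have := step1 k
    have : φ (x (k+1)) ≤ φ (x k) := by nlinarith [sq_nonneg ‖y k - x k‖]
    exact this
  have habdd : BddBelow (Set.range a) := by
    apply hbdd.mono
    rintro _ ⟨k, rfl⟩; exact ⟨x k, rfl⟩
  have hlim : Tendsto a atTop (𝓝 (⨅ k, a k)) := tendsto_atTop_ciInf hanti habdd
  have hlim' : Tendsto (fun k => a (k + 1)) atTop (𝓝 (⨅ k, a k)) :=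
    hlim.comp (tendsto_add_atTop_nat 1)
  have hdiff : Tendsto (fun k => a k - a (k + 1)) atTop (𝓝 0) := by
    simpa using hlim.sub hlim'
  have hsq : Tendsto (fun k => ‖y k - x k‖ ^ 2) atTop (𝓝 0) := by
    apply squeeze_zero (fun k => by positivity)
      (g := fun k => 2 / ρ * (a k - a (k + 1)))
    · intro k
      have := step1 k
      have hρ' : (0:ℝ) < 2 / ρ := by positivity
      rw [ha]
      have h1 : ρ / 2 * ‖y k - x k‖ ^ 2 ≤ φ (x k) - φ (x (k + 1)) := by linarith
      calc ‖y k - x k‖ ^ 2 = 2 / ρ * (ρ / 2 * ‖y k - x k‖ ^ 2) := by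
            field_simp
        _ ≤ 2 / ρ * (φ (x k) - φ (x (k + 1))) := by
            apply mul_le_mul_of_nonneg_left h1 hρ'.le
    · simpa using hdiff.const_mul (2 / ρ)
  have hnorm : Tendsto (fun k => ‖y k - x k‖) atTop (𝓝 0) := by
    have := (Real.continuous_sqrt.tendsto 0).comp hsq
    simp only [Real.sqrt_zero] at this
    convert this using 2 with k
    simp [Function.comp, Real.sqrt_sq (norm_nonneg _)]
  have hd0 : Tendsto (fun k => y k - x k) atTop (𝓝 0) :=
    tendsto_zero_iff_norm_tendsto_zero.2 hnorm
  -- subsequence converging to xbar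
  obtain ⟨ψ, hψmono, hx⟩ := TopologicalSpace.FirstCountableTopology.tendsto_subseq hcluster
  have hy : Tendsto (fun j => y (ψ j)) atTop (𝓝 xbar) := by
    have := hx.add (hd0.comp hψmono.tendsto_atTop)
    simp only [add_zero] at this
    convert this using 2 with j
    simp [Function.comp]
  -- continuity of the gradient of g
  have hgradcont : Continuous fun z => gradient g z := by
    have hfd : Continuous fun z => fderiv ℝ g z := hg1.continuous_fderiv one_ne_zero
    unfold gradient
    exact (InnerProductSpace.toDual ℝ _).symm.continuous.comp hfd
  -- continuity of h
  have hhcont : Continuous h := by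
    have h1c : Continuous fun z : EuclideanSpace ℝ (Fin m) => h z - ρ / 2 * ‖z‖ ^ 2 := by
      exact continuousOn_univ.mp (hh.continuousOn isOpen_univ)
    have h2c : Continuous fun z : EuclideanSpace ℝ (Fin m) => ρ / 2 * ‖z‖ ^ 2 :=
      continuous_const.mul (continuous_norm.pow 2)
    have := h1c.add h2c
    convert this using 1; funext z; simp
  -- conclude
  intro z
  have hterm : Tendsto (fun j => h (x (ψ j)) + ⟪gradient g (y (ψ j)), z - x (ψ j)⟫) atTop
      (𝓝 (h xbar + ⟪gradient g xbar, z - xbar⟫)) := by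
    apply Tendsto.add
    · exact (hhcont.tendsto _).comp hx
    · exact Tendsto.inner ((hgradcont.tendsto _).comp hy) (tendsto_const_nhds.sub hx)
  exact le_of_tendsto hterm (Eventually.of_forall fun j => hsub (ψ j) z)
end

section
/- Let g, h : ℝ^m → ℝ be strongly convex with modulus ρ > 0, with g continuously differentiable, φ := g − h, and inf_{x∈ℝ^m} φ(x) > −∞. Let {x_k}, {y_k}, {λ_k} be a BDCA sequence (with parameter α > 0). If φ is coercive (φ(x) → +∞ as ‖x‖ → +∞), then there exists a subsequence of {x_k} converging to a critical point of φ. -/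
open scoped RealInnerProductSpace
open Filter Topology

lemma grad_ineq {m : ℕ} (g : EuclideanSpace ℝ (Fin m) → ℝ) (ρ : ℝ)
    (hg : ConvexOn ℝ Set.univ fun z => g z - ρ / 2 * ‖z‖ ^ 2)
    (hg1 : ContDiff ℝ 1 g) (a b : EuclideanSpace ℝ (Fin m)) :
    g b + ⟪gradient g b, a - b⟫ + ρ / 2 * ‖a - b‖ ^ 2 ≤ g a := by
  set G : EuclideanSpace ℝ (Fin m) → ℝ := fun z => g z - ρ / 2 * ‖z‖ ^ 2 with hG
  set L : ℝ →ᵃ[ℝ] EuclideanSpace ℝ (Fin m) := AffineMap.lineMap b a with hL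
  set F : EuclideanSpace ℝ (Fin m) →L[ℝ] ℝ :=
    fderiv ℝ g b - (ρ / 2) • (2 • (innerSL ℝ b)) with hF
  have hψ : ConvexOn ℝ Set.univ (G ∘ L) := by
    have := hg.comp_affineMap L
    simpa using this
  have hline : HasDerivAt (fun t : ℝ => L t) (a - b) 0 := by
    have h0 : HasDerivAt (fun t : ℝ => t • (a - b) + b) ((1 : ℝ) • (a - b)) 0 :=
      ((hasDerivAt_id 0).smul_const (a - b)).add_const b
    simp only [one_smul] at h0
    have heq : (fun t : ℝ => L t) = fun t : ℝ => t • (a - b) + b := by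
      funext t; simp [hL, AffineMap.lineMap_apply_module]; module
    rw [heq]; exact h0
  have hgd : HasFDerivAt g (fderiv ℝ g b) b :=
    ((hg1.differentiable one_ne_zero) b).hasFDerivAt
  have hns : HasFDerivAt (fun z : EuclideanSpace ℝ (Fin m) => ρ / 2 * ‖z‖ ^ 2)
      ((ρ / 2) • (2 • (innerSL ℝ b))) b := by
    have h2 : HasFDerivAt (fun z : EuclideanSpace ℝ (Fin m) => ‖z‖ ^ 2)
        (2 • ((innerSL ℝ b).comp (ContinuousLinearMap.id ℝ _))) b :=
      (hasFDerivAt_id b).norm_sq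
    simpa [smul_smul] using h2.const_mul (ρ / 2)
  have hGd : HasFDerivAt G F b := hgd.sub hns
  have hLb : L (0 : ℝ) = b := by simp [hL]
  have hGd' : HasFDerivAt G F (L 0) := hLb ▸ hGd
  have hchain : HasDerivAt (G ∘ L) (F (a - b)) 0 := hGd'.comp_hasDerivAt 0 hline
  have hslope : F (a - b) ≤ slope (G ∘ L) 0 1 :=
    hψ.le_slope_of_hasDerivAt (Set.mem_univ 0) (Set.mem_univ 1) one_pos hchain
  have hsl : slope (G ∘ L) 0 1 = G a - G b := by
    simp [slope_def_field, hL]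
  have hFab : F (a - b) = ⟪gradient g b, a - b⟫ - ρ * ⟪b, a - b⟫ := by
    have h1 : fderiv ℝ g b (a - b) = ⟪gradient g b, a - b⟫ := by
      rw [gradient]
      rw [InnerProductSpace.toDual_symm_apply]
    simp only [hF]
    rw [ContinuousLinearMap.sub_apply, h1]
    simp only [ContinuousLinearMap.smul_apply, innerSL_apply_apply, smul_eq_mul]
    ring
  rw [hsl, hFab] at hslope
  have hexp : ‖a - b‖ ^ 2 = ‖a‖ ^ 2 - 2 * ⟪b, a⟫ + ‖b‖ ^ 2 := by
    rw [norm_sub_sq_real, real_inner_comm]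
  have hib : ⟪b, a - b⟫ = ⟪b, a⟫ - ‖b‖ ^ 2 := by
    rw [inner_sub_right, real_inner_self_eq_norm_sq]
  simp only [hG] at hslope
  rw [hib] at hslope
  rw [hexp]
  linarith [hslope]

theorem stmt6 {m : ℕ} (g h : EuclideanSpace ℝ (Fin m) → ℝ) (ρ : ℝ) (hρ : 0 < ρ)
    (hg : ConvexOn ℝ Set.univ fun z => g z - ρ / 2 * ‖z‖ ^ 2)
    (hh : ConvexOn ℝ Set.univ fun z => h z - ρ / 2 * ‖z‖ ^ 2)
    (hg1 : ContDiff ℝ 1 g)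
    (φ : EuclideanSpace ℝ (Fin m) → ℝ) (hφ : φ = fun z => g z - h z)
    (hbdd : BddBelow (Set.range φ))
    (α : ℝ) (hα : 0 < α)
    (x y : ℕ → EuclideanSpace ℝ (Fin m)) (lam : ℕ → ℝ)
    (hlam : ∀ k, 0 ≤ lam k)
    (hsub : ∀ k, gradient g (y k) ∈ subdiff h (x k))
    (hdesc : ∀ k, φ (y k + lam k • (y k - x k)) ≤ φ (y k) - α * lam k ^ 2 * ‖y k - x k‖ ^ 2)
    (hnext : ∀ k, x (k + 1) = y k + lam k • (y k - x k))
    (hcoercive : Tendsto φ (Bornology.cobounded (EuclideanSpace ℝ (Fin m))) atTop) :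
    ∃ (σ : ℕ → ℕ) (xbar : EuclideanSpace ℝ (Fin m)), StrictMono σ ∧
      Tendsto (fun i => x (σ i)) atTop (𝓝 xbar) ∧ gradient g xbar ∈ subdiff h xbar := by
  -- key descent inequality
  have hkey : ∀ k, φ (x (k + 1)) ≤ φ (x k) - ρ / 2 * ‖y k - x k‖ ^ 2 := by
    intro k
    have h1 := grad_ineq g ρ hg hg1 (x k) (y k)
    have h2 := hsub k (y k)
    have h3 := hdesc k
    rw [← hnext k] at h3
    have hneg : (⟪gradient g (y k), x k - y k⟫ : ℝ)
        = -⟪gradient g (y k), y k - x k⟫ := by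
      rw [show x k - y k = -(y k - x k) by abel, inner_neg_right]
    have hnn : 0 ≤ α * lam k ^ 2 * ‖y k - x k‖ ^ 2 := by positivity
    have hnrm : ‖x k - y k‖ = ‖y k - x k‖ := norm_sub_rev _ _
    rw [hneg, hnrm] at h1
    simp only [hφ] at h3 ⊢
    linarith
  have hanti : Antitone fun k => φ (x k) := by
    apply antitone_nat_of_succ_le
    intro k
    have := hkey k
    nlinarith [sq_nonneg ‖y k - x k‖]
  have hbddx : BddBelow (Set.range fun k => φ (x k)) :=
    hbdd.mono (Set.range_comp_subset_range x φ)
  have hconvφ : Tendsto (fun k => φ (x k)) atTop (𝓝 (⨅ k, φ (x k))) :=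
    tendsto_atTop_ciInf hanti hbddx
  have hconvφ' : Tendsto (fun k => φ (x (k + 1))) atTop (𝓝 (⨅ k, φ (x k))) :=
    hconvφ.comp (tendsto_add_atTop_nat 1)
  have hdiff0 : Tendsto (fun k => φ (x k) - φ (x (k + 1))) atTop (𝓝 0) := by
    have := hconvφ.sub hconvφ'
    simpa using this
  have hd2 : Tendsto (fun k => ‖y k - x k‖ ^ 2) atTop (𝓝 0) := by
    apply squeeze_zero (fun k => sq_nonneg _)
      (g := fun k => 2 / ρ * (φ (x k) - φ (x (k + 1))))
    · intro k
      have hk := hkey k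
      have h1 : ρ / 2 * ‖y k - x k‖ ^ 2 ≤ φ (x k) - φ (x (k + 1)) := by linarith
      rw [show ‖y k - x k‖ ^ 2 = 2 / ρ * (ρ / 2 * ‖y k - x k‖ ^ 2) by field_simp]
      have hρ' : (0:ℝ) ≤ 2 / ρ := by positivity
      exact mul_le_mul_of_nonneg_left h1 hρ'
    · have := hdiff0.const_mul (2 / ρ)
      simpa using this
  have hdn : Tendsto (fun k => ‖y k - x k‖) atTop (𝓝 0) := by
    have hs := (Real.continuous_sqrt.tendsto 0).comp hd2
    simp only [Function.comp_def, Real.sqrt_zero] at hs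
    have heq : ∀ k, Real.sqrt (‖y k - x k‖ ^ 2) = ‖y k - x k‖ := fun k =>
      Real.sqrt_sq (norm_nonneg _)
    simpa only [heq] using hs
  have hd0 : Tendsto (fun k => y k - x k) atTop (𝓝 0) :=
    tendsto_zero_iff_norm_tendsto_zero.mpr hdn
  -- boundedness of the sequence
  set S : Set (EuclideanSpace ℝ (Fin m)) := {z | φ z ≤ φ (x 0)} with hS
  have hSb : Bornology.IsBounded S := by
    have hev : ∀ᶠ z in Bornology.cobounded (EuclideanSpace ℝ (Fin m)), φ (x 0) < φ z :=
      hcoercive.eventually_gt_atTop _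
    have hco : Bornology.IsCobounded Sᶜ := by
      refine Filter.mem_of_superset hev fun z hz => ?_
      simp only [hS, Set.mem_compl_iff, Set.mem_setOf_eq]
      exact not_le.mpr hz
    exact Bornology.isCobounded_compl_iff.mp hco
  have hmem : ∀ n, x n ∈ S := fun n => hanti (Nat.zero_le n)
  obtain ⟨xbar, -, σ, hσ, hxσ⟩ := tendsto_subseq_of_bounded hSb hmem
  have hyσ : Tendsto (fun i => y (σ i)) atTop (𝓝 xbar) := by
    have hdσ : Tendsto (fun i => y (σ i) - x (σ i)) atTop (𝓝 0) :=
      hd0.comp hσ.tendsto_atTop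
    have heq : (fun i => y (σ i)) =
        fun i => (x ∘ σ) i + ((fun k => y k - x k) ∘ σ) i := by
      funext i; simp only [Function.comp_apply]; abel
    rw [heq]
    simpa using hxσ.add hdσ
  -- continuity facts
  have hgradc : Continuous (gradient g) := by
    have hf : Continuous (fderiv ℝ g) := hg1.continuous_fderiv one_ne_zero
    have : gradient g = fun z =>
        (InnerProductSpace.toDual ℝ (EuclideanSpace ℝ (Fin m))).symm (fderiv ℝ g z) := rfl
    rw [this]
    exact (LinearIsometryEquiv.continuous _).comp hf
  have hhc : Continuous h := by
    have h1 : Continuous fun z : EuclideanSpace ℝ (Fin m) => h z - ρ / 2 * ‖z‖ ^ 2 :=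
      hh.locallyLipschitz.continuous
    have h2 : Continuous fun z : EuclideanSpace ℝ (Fin m) => ρ / 2 * ‖z‖ ^ 2 :=
      ((contDiff_norm_sq (𝕜 := ℝ) (n := 1)).continuous).const_smul (ρ / 2)
    have : h = fun z => (h z - ρ / 2 * ‖z‖ ^ 2) + ρ / 2 * ‖z‖ ^ 2 := by
      funext z; ring
    rw [this]
    exact h1.add h2
  refine ⟨σ, xbar, hσ, by exact hxσ, ?_⟩
  intro z
  have hlim : Tendsto
      (fun i => h (x (σ i)) + ⟪gradient g (y (σ i)), z - x (σ i)⟫) atTop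
      (𝓝 (h xbar + ⟪gradient g xbar, z - xbar⟫)) := by
    have hxσ' : Tendsto (fun i => x (σ i)) atTop (𝓝 xbar) := by
      exact hxσ
    exact ((hhc.tendsto xbar).comp hxσ').add
      (((hgradc.tendsto xbar).comp hyσ).inner (tendsto_const_nhds.sub hxσ'))
  exact le_of_tendsto hlim (Filter.Eventually.of_forall fun i => hsub (σ i) z)
end

section
/- Let g, h : ℝ^m → ℝ be strongly convex with modulus ρ > 0, with g continuously differentiable, φ := g − h, and inf_{x∈ℝ^m} φ(x) > −∞. Let {x_k}, {y_k}, {λ_k} be a BDCA sequence (with parameter α > 0) and d_k := y_k − x_k. Then the series ∑_{k=0}^{∞} ‖d_k‖² converges. -/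
open scoped RealInnerProductSpace
open Filter Topology

theorem stmt7 {m : ℕ} (g h : EuclideanSpace ℝ (Fin m) → ℝ) (ρ : ℝ) (hρ : 0 < ρ)
    (hg : ConvexOn ℝ Set.univ fun z => g z - ρ / 2 * ‖z‖ ^ 2)
    (hh : ConvexOn ℝ Set.univ fun z => h z - ρ / 2 * ‖z‖ ^ 2)
    (hg1 : ContDiff ℝ 1 g)
    (φ : EuclideanSpace ℝ (Fin m) → ℝ) (hφ : φ = fun z => g z - h z)
    (hbdd : BddBelow (Set.range φ))
    (α : ℝ) (hα : 0 < α)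
    (x y : ℕ → EuclideanSpace ℝ (Fin m)) (lam : ℕ → ℝ)
    (hlam : ∀ k, 0 ≤ lam k)
    (hsub : ∀ k, gradient g (y k) ∈ subdiff h (x k))
    (hdesc : ∀ k, φ (y k + lam k • (y k - x k)) ≤ φ (y k) - α * lam k ^ 2 * ‖y k - x k‖ ^ 2)
    (hnext : ∀ k, x (k + 1) = y k + lam k • (y k - x k)) :
    Summable fun k => ‖y k - x k‖ ^ 2 := by
  obtain ⟨B, hB⟩ := hbdd
  have hBle : ∀ z, B ≤ φ z := fun z => hB ⟨z, rfl⟩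
  -- key per-step decrease
  have hstep : ∀ k, φ (x (k + 1)) ≤ φ (x k) - ρ / 2 * ‖y k - x k‖ ^ 2 := by
    intro k
    have h1 : φ (x (k + 1)) ≤ φ (y k) := by
      rw [hnext k]
      have := hdesc k
      have h0 : 0 ≤ α * lam k ^ 2 * ‖y k - x k‖ ^ 2 := by positivity
      linarith
    have h2 : h (x k) + ⟪gradient g (y k), y k - x k⟫ ≤ h (y k) := hsub k (y k)
    have h3 := grad_ineq g ρ hg hg1 (x k) (y k)
    have h4 : ⟪gradient g (y k), x k - y k⟫ + ⟪gradient g (y k), y k - x k⟫ = 0 := by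
      rw [inner_sub_right, inner_sub_right]; ring
    have h5 : ‖x k - y k‖ = ‖y k - x k‖ := norm_sub_rev _ _
    rw [h5] at h3
    have h6 : φ (y k) ≤ φ (x k) - ρ / 2 * ‖y k - x k‖ ^ 2 := by
      simp only [hφ]
      linarith
    linarith
  -- telescoping bound
  have htel : ∀ n, φ (x n) + ∑ k ∈ Finset.range n, ρ / 2 * ‖y k - x k‖ ^ 2 ≤ φ (x 0) := by
    intro n
    induction n with
    | zero => simp
    | succ n ih =>
      rw [Finset.sum_range_succ]
      have := hstep n
      linarith
  apply summable_of_sum_range_le (c := (φ (x 0) - B) * (2 / ρ))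
    (fun n => by positivity)
  intro n
  have h1 : ∑ k ∈ Finset.range n, ρ / 2 * ‖y k - x k‖ ^ 2 ≤ φ (x 0) - B := by
    have := htel n
    have := hBle (x n)
    linarith
  have h2 : ∑ k ∈ Finset.range n, ρ / 2 * ‖y k - x k‖ ^ 2
      = ρ / 2 * ∑ k ∈ Finset.range n, ‖y k - x k‖ ^ 2 := by
    rw [Finset.mul_sum]
  rw [h2] at h1
  have hρ2 : 0 < ρ / 2 := by linarith
  calc ∑ k ∈ Finset.range n, ‖y k - x k‖ ^ 2
      = (ρ / 2 * ∑ k ∈ Finset.range n, ‖y k - x k‖ ^ 2) * (2 / ρ) := by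
        field_simp
    _ ≤ (φ (x 0) - B) * (2 / ρ) := by
        apply mul_le_mul_of_nonneg_right h1
        positivity
end

section
/- Let g, h : ℝ^m → ℝ be strongly convex with modulus ρ > 0, with g continuously differentiable, φ := g − h, and inf_{x∈ℝ^m} φ(x) > −∞. Let {x_k}, {y_k}, {λ_k} be a BDCA sequence (with parameter α > 0). If there exists λ̄ ≥ 0 such that λ_k ≤ λ̄ for all k, then the series ∑_{k=0}^{∞} ‖x_{k+1} − x_k‖² converges. -/
open scoped RealInnerProductSpace
open Filter Topology

lemma strong_grad {m : ℕ} (g : EuclideanSpace ℝ (Fin m) → ℝ) (ρ : ℝ)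
    (hg : ConvexOn ℝ Set.univ fun z => g z - ρ / 2 * ‖z‖ ^ 2)
    (hg1 : ContDiff ℝ 1 g) (y x : EuclideanSpace ℝ (Fin m)) :
    g y + ⟪gradient g y, x - y⟫ + ρ / 2 * ‖x - y‖ ^ 2 ≤ g x := by
  set d : EuclideanSpace ℝ (Fin m) := x - y with hd
  have hdg : DifferentiableAt ℝ g y := (hg1.differentiable one_ne_zero).differentiableAt
  have hgrad : HasFDerivAt g (InnerProductSpace.toDual ℝ _ (gradient g y)) y :=
    hasGradientAt_iff_hasFDerivAt.mp hdg.hasGradientAt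
  have hline : HasDerivAt (fun t : ℝ => y + t • d) d 0 := by
    simpa using ((hasDerivAt_id (0:ℝ)).smul_const d).const_add y
  have hy0 : y + (0:ℝ) • d = y := by simp
  have h1 : HasDerivAt (fun t : ℝ => g (y + t • d)) ⟪gradient g y, d⟫ 0 := by
    have := (hy0.symm ▸ hgrad).comp_hasDerivAt 0 hline
    simp at this ⊢; exact this
  have h2 : HasDerivAt (fun t : ℝ => ρ / 2 * ‖y + t • d‖ ^ 2) (ρ * ⟪y, d⟫) 0 := by
    have hfun : (fun t : ℝ => ρ / 2 * ‖y + t • d‖ ^ 2)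
        = fun t => ρ / 2 * (‖y‖ ^ 2 + 2 * ⟪y, d⟫ * t + ‖d‖ ^ 2 * t ^ 2) := by
      funext t
      rw [norm_add_sq_real, real_inner_smul_right, norm_smul]
      rw [mul_pow, Real.norm_eq_abs, sq_abs]
      ring
    rw [hfun]
    have ha : HasDerivAt (fun t : ℝ => 2 * ⟪y, d⟫ * t) (2 * ⟪y, d⟫) 0 := by
      simpa using (hasDerivAt_id (0:ℝ)).const_mul (2 * ⟪y, d⟫)
    have hb : HasDerivAt (fun t : ℝ => ‖d‖ ^ 2 * t ^ 2) (0 : ℝ) 0 := by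
      simpa using (hasDerivAt_pow 2 (0:ℝ)).const_mul (‖d‖ ^ 2)
    have hc := (((hasDerivAt_const (0:ℝ) (‖y‖ ^ 2)).add ha).add hb).const_mul (ρ / 2)
    rw [show ρ * ⟪y, d⟫ = ρ / 2 * (0 + 2 * ⟪y, d⟫ + 0) by ring]
    exact hc
  have h3 : HasDerivAt (fun t : ℝ => g (y + t • d) - ρ / 2 * ‖y + t • d‖ ^ 2)
      (⟪gradient g y, d⟫ - ρ * ⟪y, d⟫) 0 := h1.sub h2
  have hfconv : ConvexOn ℝ Set.univ (fun t : ℝ => g (y + t • d) - ρ / 2 * ‖y + t • d‖ ^ 2) := by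
    have := hg.comp_affineMap (AffineMap.lineMap y x)
    have heq : ((fun z => g z - ρ / 2 * ‖z‖ ^ 2) ∘ (AffineMap.lineMap y x : ℝ →ᵃ[ℝ] _))
        = fun t : ℝ => g (y + t • d) - ρ / 2 * ‖y + t • d‖ ^ 2 := by
      funext t
      simp [AffineMap.lineMap_apply, hd, add_comm]
    simpa [heq] using this
  have hslope := hfconv.le_slope_of_hasDerivAt (Set.mem_univ (0:ℝ)) (Set.mem_univ (1:ℝ))
    zero_lt_one h3
  have hyd : y + (1:ℝ) • d = x := by simp [hd]
  rw [slope_def_field] at hslope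
  simp only [hy0, hyd] at hslope
  have hns : ‖x - y‖ ^ 2 = ‖x‖ ^ 2 - 2 * ⟪x, y⟫ + ‖y‖ ^ 2 := norm_sub_sq_real x y
  have hsub : ⟪y, d⟫ = ⟪y, x⟫ - ‖y‖ ^ 2 := by
    rw [hd, inner_sub_right, real_inner_self_eq_norm_sq]
  have hcomm : ⟪x, y⟫ = ⟪y, x⟫ := real_inner_comm y x
  have : ⟪gradient g y, d⟫ - ρ * ⟪y, d⟫ ≤ (g x - ρ / 2 * ‖x‖ ^ 2 - (g y - ρ / 2 * ‖y‖ ^ 2)) / (1 - 0) := hslope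
  rw [sub_zero, div_one] at this
  have e1 : ρ / 2 * ‖x - y‖ ^ 2 = ρ / 2 * ‖x‖ ^ 2 - ρ * ⟪y, x⟫ + ρ / 2 * ‖y‖ ^ 2 := by
    rw [hns, hcomm]; ring
  have e2 : ρ * ⟪y, d⟫ = ρ * ⟪y, x⟫ - ρ * ‖y‖ ^ 2 := by rw [hsub]; ring
  rw [hd] at *
  linarith [this, e1, e2]

theorem stmt8 {m : ℕ} (g h : EuclideanSpace ℝ (Fin m) → ℝ) (ρ : ℝ) (hρ : 0 < ρ)
    (hg : ConvexOn ℝ Set.univ fun z => g z - ρ / 2 * ‖z‖ ^ 2)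
    (hh : ConvexOn ℝ Set.univ fun z => h z - ρ / 2 * ‖z‖ ^ 2)
    (hg1 : ContDiff ℝ 1 g)
    (φ : EuclideanSpace ℝ (Fin m) → ℝ) (hφ : φ = fun z => g z - h z)
    (hbdd : BddBelow (Set.range φ))
    (α : ℝ) (hα : 0 < α)
    (x y : ℕ → EuclideanSpace ℝ (Fin m)) (lam : ℕ → ℝ)
    (hlam : ∀ k, 0 ≤ lam k)
    (hsub : ∀ k, gradient g (y k) ∈ subdiff h (x k))
    (hdesc : ∀ k, φ (y k + lam k • (y k - x k)) ≤ φ (y k) - α * lam k ^ 2 * ‖y k - x k‖ ^ 2)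
    (hnext : ∀ k, x (k + 1) = y k + lam k • (y k - x k))
    (lamBar : ℝ) (hlamBar : 0 ≤ lamBar) (hle : ∀ k, lam k ≤ lamBar) :
    Summable fun k => ‖x (k + 1) - x k‖ ^ 2 := by
  obtain ⟨B, hB⟩ := hbdd
  have hBle : ∀ z, B ≤ φ z := fun z => hB (Set.mem_range_self z)
  have key : ∀ k, φ (x (k + 1)) + ρ / 2 * ‖y k - x k‖ ^ 2 ≤ φ (x k) := by
    intro k
    have hsc := strong_grad g ρ hg hg1 (y k) (x k)
    have hsd := hsub k (y k)
    have hdk := hdesc k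
    rw [← hnext k] at hdk
    have hα0 : 0 ≤ α * lam k ^ 2 * ‖y k - x k‖ ^ 2 := by positivity
    have hinner : ⟪gradient g (y k), x k - y k⟫ = -⟪gradient g (y k), y k - x k⟫ := by
      rw [← inner_neg_right, neg_sub]
    have hnorm : ‖x k - y k‖ = ‖y k - x k‖ := norm_sub_rev _ _
    rw [hnorm, hinner] at hsc
    rw [hφ] at hdk ⊢
    simp only at hdk ⊢
    linarith
  have hsum_b : Summable (fun k => ‖y k - x k‖ ^ 2) := by
    apply summable_of_sum_range_le (c := (φ (x 0) - B) * (2 / ρ)) (fun k => sq_nonneg _)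
    intro n
    have htel : ∑ i ∈ Finset.range n, ρ / 2 * ‖y i - x i‖ ^ 2 ≤ φ (x 0) - φ (x n) := by
      induction n with
      | zero => simp
      | succ n ih =>
        rw [Finset.sum_range_succ]
        have := key n
        linarith
    have hBn := hBle (x n)
    have hsum_eq : ∑ i ∈ Finset.range n, ‖y i - x i‖ ^ 2
        = (2 / ρ) * ∑ i ∈ Finset.range n, (ρ / 2 * ‖y i - x i‖ ^ 2) := by
      rw [Finset.mul_sum]
      refine Finset.sum_congr rfl fun i _ => ?_
      field_simp
    rw [hsum_eq]
    have h2ρ : 0 < 2 / ρ := by positivity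
    nlinarith [htel, hBn]
  have hx1 : ∀ k, ‖x (k + 1) - x k‖ ^ 2 ≤ (1 + lamBar) ^ 2 * ‖y k - x k‖ ^ 2 := by
    intro k
    have hxe : x (k + 1) - x k = (1 + lam k) • (y k - x k) := by
      rw [hnext k]
      module
    rw [hxe, norm_smul, Real.norm_eq_abs, abs_of_nonneg (by linarith [hlam k]), mul_pow]
    have h1 : (1 + lam k) ^ 2 ≤ (1 + lamBar) ^ 2 := by nlinarith [hlam k, hle k]
    nlinarith [sq_nonneg ‖y k - x k‖]
  exact Summable.of_nonneg_of_le (fun k => sq_nonneg _) hx1 (hsum_b.mul_left _)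
end

section
/- Let g : ℝ → ℝ and h : ℝ → ℝ be convex functions with h differentiable, and set φ := g − h. Let x, y ∈ ℝ satisfy h'(x) ∈ ∂g(y) and h'(y) ∉ ∂g(y) (the latter being equivalent to 0 ∉ ∂_C φ(y), since the Clarke subdifferential of φ at y equals ∂g(y) − h'(y)). Then the one-sided directional derivative of φ at y in the direction y − x is negative: φ'(y; y − x) < 0. -/
open Filter Topology

/-- The convex subdifferential of `f : ℝ → ℝ` at `y`. -/
def subdiffR (f : ℝ → ℝ) (y : ℝ) : Set ℝ :=
  {u | ∀ z, f y + u * (z - y) ≤ f z}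

theorem stmt9 (g h : ℝ → ℝ)
    (hg : ConvexOn ℝ Set.univ g) (hh : ConvexOn ℝ Set.univ h)
    (hhdiff : Differentiable ℝ h)
    (φ : ℝ → ℝ) (hφ : φ = fun z => g z - h z)
    (x y : ℝ)
    (hmem : deriv h x ∈ subdiffR g y)
    (hnot : deriv h y ∉ subdiffR g y) :
    ∃ L : ℝ, Tendsto (fun t : ℝ => (φ (y + t * (y - x)) - φ y) / t) (𝓝[>] 0) (𝓝 L) ∧
      L < 0 := by
  set d : ℝ := y - x with hd
  have hxy : x ≠ y := by
    rintro rfl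
    exact hnot hmem
  have hdne : d ≠ 0 := sub_ne_zero.mpr (Ne.symm hxy)
  -- monotonicity of deriv h
  have hmono : Monotone (deriv h) := by
    have := hh.monotoneOn_deriv (fun z _ => hhdiff z)
    intro a b hab
    exact this (Set.mem_univ a) (Set.mem_univ b) hab
  -- convexity of t ↦ g (y + t * d)
  have hψ : ConvexOn ℝ Set.univ (fun t : ℝ => g (y + t * d)) := by
    have := hg.comp_affineMap (AffineMap.lineMap y (y + d) : ℝ →ᵃ[ℝ] ℝ)
    convert (this.subset (Set.subset_univ _) convex_univ : ConvexOn ℝ Set.univ (g ∘ ⇑(AffineMap.lineMap y (y + d)))) using 2 with t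
    iterate 4 exact rfl
    simp [AffineMap.lineMap_apply]
    ring
  -- the g-slope function
  set q : ℝ → ℝ := fun t => (g (y + t * d) - g y) / t with hq
  have hqmono : MonotoneOn q (Set.Ioi (0 : ℝ)) := by
    intro a ha b hb hab
    have := hψ.secant_mono (a := 0) (x := a) (y := b) (Set.mem_univ _) (Set.mem_univ _)
      (Set.mem_univ _) (ne_of_gt ha) (ne_of_gt hb) hab
    simpa [hq, sub_zero] using this
  have hqbdd : BddBelow (q '' Set.Ioi (0 : ℝ)) := by
    refine ⟨deriv h x * d, ?_⟩
    rintro - ⟨t, ht, rfl⟩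
    have ht' : (0 : ℝ) < t := ht
    have := hmem (y + t * d)
    have h1 : deriv h x * (t * d) ≤ g (y + t * d) - g y := by
      simpa [mul_comm] using (by linarith [hmem (y + t * d)] : deriv h x * (y + t * d - y) ≤ g (y + t * d) - g y)
    rw [hq]
    rw [le_div_iff₀ ht']
    nlinarith
  set Lg : ℝ := sInf (q '' Set.Ioi (0 : ℝ)) with hLg
  have hqt : Tendsto q (𝓝[>] 0) (𝓝 Lg) := hqmono.tendsto_nhdsGT hqbdd
  -- the h-slope function
  have hhd : HasDerivAt (fun t : ℝ => h (y + t * d)) (deriv h y * d) 0 := by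
    have inner : HasDerivAt (fun t : ℝ => y + t * d) d 0 := by
      simpa using ((hasDerivAt_id (0 : ℝ)).mul_const d).const_add y
    have outer : HasDerivAt h (deriv h y) (y + 0 * d) := by
      simpa using (hhdiff y).hasDerivAt
    exact outer.comp 0 inner
  have hrt : Tendsto (fun t : ℝ => (h (y + t * d) - h y) / t) (𝓝[>] 0) (𝓝 (deriv h y * d)) := by
    have := hhd.tendsto_slope_zero_right
    simp only [zero_add, zero_mul, add_zero, smul_eq_mul] at this
    refine this.congr fun t => ?_
    rw [inv_mul_eq_div]
  -- combine
  refine ⟨Lg - deriv h y * d, ?_, ?_⟩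
  · have := hqt.sub hrt
    refine this.congr fun t => ?_
    simp only [hq, hφ]
    ring
  · -- L < 0, i.e. Lg < deriv h y * d
    rw [sub_neg]
    by_contra hcon
    push_neg at hcon
    -- then deriv h y ∈ subdiffR g y, contradiction
    refine hnot fun z => ?_
    have hqlow : ∀ t : ℝ, 0 < t → g y + deriv h y * (t * d) ≤ g (y + t * d) := by
      intro t ht
      have h1 : Lg ≤ q t := csInf_le hqbdd ⟨t, ht, rfl⟩
      have h2 : deriv h y * d ≤ (g (y + t * d) - g y) / t := le_trans (le_trans hcon h1) (le_refl _)
      rw [le_div_iff₀ ht] at h2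
      nlinarith
    rcases eq_or_ne z y with rfl | hz
    · simp
    by_cases hsign : 0 < (z - y) / d
    · have key := hqlow ((z - y) / d) hsign
      have e1 : (z - y) / d * d = z - y := div_mul_cancel₀ _ hdne
      rw [e1] at key
      have e2 : y + (z - y) = z := by ring
      rwa [e2] at key
    · push_neg at hsign
      have hzd : (z - y) * d ≤ 0 := by
        have : (z - y) * d = ((z - y) / d) * d ^ 2 := by
          field_simp
        rw [this]
        exact mul_nonpos_of_nonpos_of_nonneg hsign (sq_nonneg d)
      have hmem' := hmem z
      rcases lt_or_gt_of_ne hdne with hdneg | hdpos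
      · -- d < 0 : y < x, deriv h y ≤ deriv h x, and z - y ≥ 0
        have hyx : y ≤ x := by simp only [hd] at hdneg; linarith
        have hde : deriv h y ≤ deriv h x := hmono hyx
        have hzy : 0 ≤ z - y := by nlinarith
        nlinarith
      · -- d > 0 : x < y, deriv h x ≤ deriv h y, and z - y ≤ 0
        have hyx : x ≤ y := by simp only [hd] at hdpos; linarith
        have hde : deriv h x ≤ deriv h y := hmono hyx
        have hzy : z - y ≤ 0 := by nlinarith
        nlinarith
end

section
/- Let {s_k} be a sequence of nonnegative real numbers converging to 0, let α > 1 and β > 0, and suppose there is N such that s_k^α ≤ β(s_k − s_{k+1}) for all k ≥ N. Then there exists η > 0 such that s_k ≤ η k^{−1/(α−1)} for all sufficiently large k. -/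
open Filter Topology

/-- Bernoulli-type inequality for negative exponents: for `0 < u ≤ 1`, `γ > 0`,
`u ^ (-γ) ≥ 1 + γ * (1 - u)`. -/
lemma bern_neg {u γ : ℝ} (hu : 0 < u) (hu1 : u ≤ 1) (hγ : 0 < γ) :
    1 + γ * (1 - u) ≤ u ^ (-γ) := by
  have hinv : u ^ (-γ) = (u⁻¹) ^ γ := by
    rw [Real.rpow_neg hu.le, Real.inv_rpow hu.le]
  rcases le_or_gt 1 γ with h1 | h1
  · have hv : 1 - u ≤ u⁻¹ - 1 := by
      rw [← sub_nonneg]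
      have : u⁻¹ - 1 - (1 - u) = (1 - u) ^ 2 / u := by field_simp
      rw [this]; positivity
    have hb := one_add_mul_self_le_rpow_one_add (s := u⁻¹ - 1) (p := γ) (by nlinarith) h1
    have he : (1 + (u⁻¹ - 1)) = u⁻¹ := by ring
    rw [he] at hb
    rw [hinv]
    nlinarith
  · have hb := rpow_one_add_le_one_add_mul_self (s := u - 1) (p := γ)
      (by linarith) hγ.le h1.le
    have he : (1 + (u - 1)) = u := by ring
    rw [he] at hb
    set t := γ * (1 - u) with ht
    have ht0 : 0 ≤ t := by
      have : 0 ≤ 1 - u := by linarith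
      positivity
    have ht1 : t < 1 := by
      have h1u : 1 - u < 1 := by linarith
      have : t ≤ 1 * (1 - u) := by
        rw [ht]; apply mul_le_mul_of_nonneg_right h1.le (by linarith)
      linarith
    have hb' : u ^ γ ≤ 1 - t := by rw [ht]; nlinarith
    have hpos : (0:ℝ) < u ^ γ := Real.rpow_pos_of_pos hu _
    have h1t : (0:ℝ) < 1 - t := lt_of_lt_of_le hpos hb'
    have step1 : 1 + t ≤ (1 - t)⁻¹ := by
      rw [← one_div, le_div_iff₀ h1t]
      nlinarith
    have step2 : (1 - t)⁻¹ ≤ (u ^ γ)⁻¹ := by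
      apply inv_anti₀ hpos hb'
    have : u ^ (-γ) = (u ^ γ)⁻¹ := Real.rpow_neg hu.le _
    rw [this]
    linarith

/-- Key step: one iteration increases `x ^ (-γ)` by at least `γ/β`. -/
lemma step_lemma {x y α β : ℝ} (hα : 1 < α) (hβ : 0 < β) (hx : 0 < x) (hy : 0 < y)
    (h : x ^ α ≤ β * (x - y)) :
    x ^ (-(α - 1)) + (α - 1) / β ≤ y ^ (-(α - 1)) := by
  set γ := α - 1 with hγdef
  have hγ : 0 < γ := by simp [hγdef]; linarith
  have hxα : 0 < x ^ α := Real.rpow_pos_of_pos hx _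
  have hxy : 0 < x - y := by
    have h1 : 0 < β * (x - y) := lt_of_lt_of_le hxα h
    by_contra hc
    push_neg at hc
    nlinarith
  have hyx : y ≤ x := by linarith
  set u := y / x with hu
  have hu0 : 0 < u := by positivity
  have hu1 : u ≤ 1 := by rw [hu, div_le_one hx]; exact hyx
  have hber := bern_neg hu0 hu1 hγ
  have hyux : y = x * u := by rw [hu]; field_simp
  have key : y ^ (-γ) = x ^ (-γ) * u ^ (-γ) := by
    rw [hyux, Real.mul_rpow hx.le hu0.le]
  have h1u : 1 - u = (x - y) / x := by rw [hu]; field_simp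
  have hxg : 0 < x ^ (-γ) := Real.rpow_pos_of_pos hx _
  have main : x ^ (-γ) * (1 + γ * (1 - u)) ≤ y ^ (-γ) := by
    rw [key]
    exact mul_le_mul_of_nonneg_left hber hxg.le
  have expand : x ^ (-γ) * (1 + γ * (1 - u))
      = x ^ (-γ) + γ * (x ^ (-γ - 1) * (x - y)) := by
    rw [h1u]
    have : x ^ (-γ - 1) = x ^ (-γ) / x := by
      rw [Real.rpow_sub hx, Real.rpow_one]
    rw [this]
    field_simp
  have hxa : x ^ (-γ - 1) * x ^ α = 1 := by
    rw [← Real.rpow_add hx]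
    have : -γ - 1 + α = 0 := by rw [hγdef]; ring
    rw [this, Real.rpow_zero]
  have hfin : γ / β ≤ γ * (x ^ (-γ - 1) * (x - y)) := by
    have hxg1 : 0 < x ^ (-γ - 1) := Real.rpow_pos_of_pos hx _
    have h2 : x ^ α / β ≤ x - y := by
      rw [div_le_iff₀ hβ]
      linarith [h, mul_comm β (x - y)]
    have h3 : x ^ (-γ - 1) * (x ^ α / β) ≤ x ^ (-γ - 1) * (x - y) :=
      mul_le_mul_of_nonneg_left h2 hxg1.le
    have h4 : x ^ (-γ - 1) * (x ^ α / β) = 1 / β := by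
      rw [mul_div_assoc']
      rw [hxa]
    rw [h4] at h3
    calc γ / β = γ * (1 / β) := by ring
      _ ≤ γ * (x ^ (-γ - 1) * (x - y)) := mul_le_mul_of_nonneg_left h3 hγ.le
  calc x ^ (-γ) + γ / β ≤ x ^ (-γ) + γ * (x ^ (-γ - 1) * (x - y)) := by linarith
    _ = x ^ (-γ) * (1 + γ * (1 - u)) := expand.symm
    _ ≤ y ^ (-γ) := main

theorem stmt12 (s : ℕ → ℝ) (hpos : ∀ k, 0 ≤ s k)
    (hlim : Tendsto s atTop (𝓝 0))
    (α β : ℝ) (hα : 1 < α) (hβ : 0 < β)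
    (N : ℕ) (hineq : ∀ k, N ≤ k → s k ^ α ≤ β * (s k - s (k + 1))) :
    ∃ η > (0 : ℝ), ∃ N' : ℕ, ∀ k, N' ≤ k → s k ≤ η * (k : ℝ) ^ (-(1 / (α - 1))) := by
  set γ := α - 1 with hγdef
  have hγ : 0 < γ := by rw [hγdef]; linarith
  have hα0 : α ≠ 0 := by linarith
  by_cases hzero : ∃ m, N ≤ m ∧ s m = 0
  · obtain ⟨m, hm, hsm⟩ := hzero
    have hall : ∀ j, s (m + j) = 0 := by
      intro j
      induction j with
      | zero => exact hsm
      | succ j ih =>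
        have h1 := hineq (m + j) (le_trans hm (Nat.le_add_right _ _))
        rw [ih, Real.zero_rpow hα0] at h1
        have h2 := hpos (m + j + 1)
        have : s (m + j + 1) ≤ 0 := by nlinarith
        have : s (m + j + 1) = 0 := le_antisymm this h2
        exact this
    refine ⟨1, one_pos, max m 1, fun k hk => ?_⟩
    have hk1 : 1 ≤ k := le_trans (le_max_right m 1) hk
    have hkm : m ≤ k := le_trans (le_max_left m 1) hk
    have : s k = 0 := by
      have := hall (k - m)
      rwa [Nat.add_sub_cancel' hkm] at this
    rw [this]
    have hk0 : (0:ℝ) < (k:ℝ) := by exact_mod_cast hk1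
    positivity
  · push_neg at hzero
    have hsp : ∀ k, N ≤ k → 0 < s k := fun k hk =>
      lt_of_le_of_ne (hpos k) (Ne.symm (hzero k hk))
    have grow : ∀ j : ℕ, (j : ℝ) * (γ / β) ≤ s (N + j) ^ (-γ) := by
      intro j
      induction j with
      | zero =>
        simp only [Nat.cast_zero, zero_mul, Nat.add_zero]
        exact (Real.rpow_pos_of_pos (hsp N le_rfl) _).le
      | succ j ih =>
        have hstep := step_lemma hα hβ (hsp (N + j) (Nat.le_add_right _ _))
          (hsp (N + j + 1) (by omega)) (hineq (N + j) (Nat.le_add_right _ _))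
        rw [← hγdef] at hstep
        have : (N + (j + 1)) = (N + j) + 1 := by omega
        rw [this]
        push_cast
        linarith
    set c := γ / (2 * β) with hc
    have hc0 : 0 < c := by rw [hc]; positivity
    refine ⟨c ^ (-(1/γ)), Real.rpow_pos_of_pos hc0 _, max (2 * N) 1, fun k hk => ?_⟩
    have hk1 : 1 ≤ k := le_trans (le_max_right _ _) hk
    have hkN : 2 * N ≤ k := le_trans (le_max_left _ _) hk
    have hkN' : N ≤ k := by omega
    have hk0 : (0:ℝ) < (k:ℝ) := by exact_mod_cast hk1
    have hgrow : c * k ≤ s k ^ (-γ) := by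
      have h1 := grow (k - N)
      rw [Nat.add_sub_cancel' hkN'] at h1
      have h2 : ((k - N : ℕ) : ℝ) = (k:ℝ) - N := by
        push_cast [Nat.cast_sub hkN']
        ring
      rw [h2] at h1
      have h3 : (N:ℝ) ≤ (k:ℝ) / 2 := by
        have h5 : ((2 * N : ℕ) : ℝ) ≤ ((k:ℕ) : ℝ) := Nat.cast_le.mpr hkN
        push_cast at h5
        linarith
      have h4 : c * k ≤ ((k:ℝ) - N) * (γ / β) := by
        have he : c * (k:ℝ) = ((k:ℝ) / 2) * (γ / β) := by
          rw [hc]; field_simp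
        rw [he]
        apply mul_le_mul_of_nonneg_right (by linarith) (by positivity)
      linarith
    have hsk : 0 < s k := hsp k hkN'
    have hck : 0 < c * k := by positivity
    have inv1 : s k ≤ (c * k) ^ (-(1/γ)) := by
      have hanti := Real.rpow_le_rpow_of_nonpos hck hgrow (neg_nonpos.mpr (by positivity) : -(1/γ) ≤ 0)
      have hid : (s k ^ (-γ)) ^ (-(1/γ)) = s k := by
        rw [← Real.rpow_mul hsk.le]
        have : (-γ) * (-(1/γ)) = 1 := by field_simp
        rw [this, Real.rpow_one]
      rwa [hid] at hanti
    have inv2 : (c * k) ^ (-(1/γ)) = c ^ (-(1/γ)) * (k:ℝ) ^ (-(1/γ)) :=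
      Real.mul_rpow hc0.le hk0.le
    rw [inv2] at inv1
    exact inv1
end

section
/- Let g, h : ℝ^m → ℝ be strongly convex with modulus ρ > 0, with g continuously differentiable, φ := g − h, and inf φ > −∞. Let {x_k}, {y_k}, {λ_k} be a BDCA sequence (with parameter α > 0) and suppose x* is a cluster point of {x_k}. Assume ∇g is Lipschitz continuous on a neighborhood of x*, and that φ satisfies the strong Kurdyka–Łojasiewicz inequality at x*: there exist η > 0, a neighborhood U of x*, and a concave function ψ : [0, η] → [0, ∞) with ψ(0) = 0, ψ continuously differentiable on (0, η) with ψ' > 0, such that for all x ∈ U with φ(x*) < φ(x) < φ(x*) + η one has ψ'(φ(x) − φ(x*)) · dist(0, ∇g(x) − ∂h(x)) ≥ 1. Then the whole sequence {x_k} converges to x*, and x* is a critical point of φ (i.e., ∇g(x*) ∈ ∂h(x*)). -/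
open scoped RealInnerProductSpace
open Filter Topology

section helpers

variable {E : Type*} [NormedAddCommGroup E] [InnerProductSpace ℝ E]

lemma norm_combo' (x y : E) {a b : ℝ} (hab : a + b = 1) :
    ‖a • x + b • y‖ ^ 2 = a * ‖x‖ ^ 2 + b * ‖y‖ ^ 2 - a * b * ‖x - y‖ ^ 2 := by
  have e : ∀ v : E, ‖v‖ ^ 2 = ⟪v, v⟫ := fun v => (real_inner_self_eq_norm_sq v).symm
  rw [e, e, e, e]
  simp only [inner_add_left, inner_add_right, inner_sub_left, inner_sub_right,
    real_inner_smul_left, real_inner_smul_right, real_inner_comm x y]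
  have hb : b = 1 - a := by linarith
  subst hb; ring

lemma sq_convexOn' {ρ : ℝ} (hρ : 0 ≤ ρ) :
    ConvexOn ℝ Set.univ (fun z : E => ρ / 2 * ‖z‖ ^ 2) := by
  refine ⟨convex_univ, fun x _ y _ a b ha hb hab => ?_⟩
  simp only [smul_eq_mul]
  rw [norm_combo' x y hab]
  nlinarith [sq_nonneg ‖x - y‖, mul_nonneg (mul_nonneg ha hb) (sq_nonneg ‖x - y‖)]

end helpers

section euclid

variable {m : ℕ}

lemma strong_subgrad' {f : EuclideanSpace ℝ (Fin m) → ℝ} {ρ : ℝ}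
    (hf : ConvexOn ℝ Set.univ fun z => f z - ρ / 2 * ‖z‖ ^ 2)
    {u x : EuclideanSpace ℝ (Fin m)} (hu : u ∈ subdiff f x) (z : EuclideanSpace ℝ (Fin m)) :
    f x + ⟪u, z - x⟫ + ρ / 2 * ‖z - x‖ ^ 2 ≤ f z := by
  have key : ∀ t : ℝ, t ∈ Set.Ioo (0 : ℝ) 1 →
      ⟪u, z - x⟫ + ρ / 2 * (1 - t) * ‖z - x‖ ^ 2 ≤ f z - f x := by
    intro t ht
    have h1 : (1 - t) + t = 1 := by ring
    have hcomb := hf.2 (Set.mem_univ x) (Set.mem_univ z) (by linarith [ht.2] : (0:ℝ) ≤ 1 - t)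
      (le_of_lt ht.1) h1
    simp only [smul_eq_mul] at hcomb
    have hnc := norm_combo' x z h1
    have hpt : (1 - t) • x + t • z = x + t • (z - x) := by
      rw [smul_sub]; module
    rw [hpt] at hcomb hnc
    have hsub := hu (x + t • (z - x))
    have hinner : ⟪u, x + t • (z - x) - x⟫ = t * ⟪u, z - x⟫ := by
      rw [add_sub_cancel_left, real_inner_smul_right]
    rw [hinner] at hsub
    have hxz : ‖x - z‖ = ‖z - x‖ := norm_sub_rev x z
    rw [hnc, hxz] at hcomb
    have ht0 : 0 < t := ht.1
    nlinarith [hcomb, hsub]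
  set Q := ‖z - x‖ ^ 2 with hQ
  have hseq : ∀ n : ℕ, ⟪u, z - x⟫ + ρ / 2 * (1 - 1 / (n + 2 : ℝ)) * Q ≤ f z - f x := by
    intro n
    refine key (1 / (n + 2 : ℝ)) ⟨by positivity, ?_⟩
    rw [div_lt_one (by positivity)]
    linarith [Nat.cast_nonneg (α := ℝ) n]
  have htend : Tendsto (fun n : ℕ => ⟪u, z - x⟫ + ρ / 2 * (1 - 1 / (n + 2 : ℝ)) * Q) atTop
      (𝓝 (⟪u, z - x⟫ + ρ / 2 * (1 - 0) * Q)) := by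
    refine Tendsto.const_add _ ?_
    refine Tendsto.mul_const _ (Tendsto.const_mul _ (Tendsto.const_sub _ ?_))
    have h2 : Tendsto (fun n : ℕ => (n : ℝ) + 2) atTop atTop :=
      tendsto_atTop_add_const_right _ 2 tendsto_natCast_atTop_atTop
    simp only [one_div]; exact h2.inv_tendsto_atTop
  have := le_of_tendsto htend (Filter.Eventually.of_forall hseq)
  linarith [this]

lemma line_hasDerivAt' (x v : EuclideanSpace ℝ (Fin m)) (t : ℝ) :
    HasDerivAt (fun s : ℝ => x + s • v) v t := by
  simpa using ((hasDerivAt_id t).smul_const v).const_add x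

lemma comp_line_hasDerivAt' {g : EuclideanSpace ℝ (Fin m) → ℝ} (hg1 : ContDiff ℝ 1 g)
    (x v : EuclideanSpace ℝ (Fin m)) (t : ℝ) :
    HasDerivAt (fun s : ℝ => g (x + s • v)) ⟪gradient g (x + t • v), v⟫ t := by
  have hd : DifferentiableAt ℝ g (x + t • v) := (hg1.differentiable one_ne_zero) _
  have hfd : HasFDerivAt g ((InnerProductSpace.toDual ℝ _) (gradient g (x + t • v)))
      (x + t • v) := hd.hasGradientAt
  have := hfd.comp_hasDerivAt t (line_hasDerivAt' x v t)
  simp at this ⊢; exact this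

lemma grad_mem_subdiff' {g : EuclideanSpace ℝ (Fin m) → ℝ}
    (hgc : ConvexOn ℝ Set.univ g) (hg1 : ContDiff ℝ 1 g) (x : EuclideanSpace ℝ (Fin m)) :
    gradient g x ∈ subdiff g x := by
  intro z
  set v := z - x with hv
  set q : ℝ → ℝ := fun s => g (x + s • v) with hq
  have hqconv : ConvexOn ℝ Set.univ q := by
    refine ⟨convex_univ, fun s _ t _ a b ha hb hab => ?_⟩
    have hx : a • x + b • x = x := by rw [← add_smul, hab, one_smul]
    have : x + (a * s + b * t) • v = a • (x + s • v) + b • (x + t • v) := by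
      have h2 : a • (x + s • v) + b • (x + t • v) = (a • x + b • x) + (a * s + b * t) • v := by
        simp [smul_add, smul_smul, add_smul]; abel
      rw [h2, hx]
    simp only [hq, smul_eq_mul, this]
    exact hgc.2 (Set.mem_univ _) (Set.mem_univ _) ha hb hab
  have hder : HasDerivAt q ⟪gradient g x, v⟫ 0 := by
    have := comp_line_hasDerivAt' hg1 x v 0
    simpa using this
  have hslope := hqconv.deriv_le_slope (Set.mem_univ (0:ℝ)) (Set.mem_univ (1:ℝ)) one_pos
    hder.differentiableAt
  rw [hder.deriv] at hslope
  have hsl : slope q 0 1 = q 1 - q 0 := by simp [slope_def_field]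
  rw [hsl] at hslope
  simp only [hq, zero_smul, add_zero, one_smul] at hslope
  have hx1 : x + v = z := by rw [hv]; abel
  rw [hx1] at hslope
  linarith [hslope]

lemma cluster_eq_of_tendsto' {X : Type*} [TopologicalSpace X] [T2Space X] {u : ℕ → X} {a b : X}
    (h1 : MapClusterPt a atTop u) (h2 : Tendsto u atTop (𝓝 b)) : a = b :=
  eq_of_nhds_neBot (h1.clusterPt.mono h2)

lemma gradient_continuous' {g : EuclideanSpace ℝ (Fin m) → ℝ} (hg1 : ContDiff ℝ 1 g) :
    Continuous (fun z => gradient g z) := by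
  have h1 : Continuous (fun z => fderiv ℝ g z) := hg1.continuous_fderiv one_ne_zero
  exact (InnerProductSpace.toDual ℝ _).symm.continuous.comp h1

end euclid

set_option maxHeartbeats 2000000

theorem stmt13 {m : ℕ} (g h : EuclideanSpace ℝ (Fin m) → ℝ) (ρ : ℝ) (hρ : 0 < ρ)
    (hg : ConvexOn ℝ Set.univ fun z => g z - ρ / 2 * ‖z‖ ^ 2)
    (hh : ConvexOn ℝ Set.univ fun z => h z - ρ / 2 * ‖z‖ ^ 2)
    (hg1 : ContDiff ℝ 1 g)
    (φ : EuclideanSpace ℝ (Fin m) → ℝ) (hφ : φ = fun z => g z - h z)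
    (hbdd : BddBelow (Set.range φ))
    (α : ℝ) (hα : 0 < α)
    (x y : ℕ → EuclideanSpace ℝ (Fin m)) (lam : ℕ → ℝ)
    (hlam : ∀ k, 0 ≤ lam k)
    (hsub : ∀ k, gradient g (y k) ∈ subdiff h (x k))
    (hdesc : ∀ k, φ (y k + lam k • (y k - x k)) ≤ φ (y k) - α * lam k ^ 2 * ‖y k - x k‖ ^ 2)
    (hnext : ∀ k, x (k + 1) = y k + lam k • (y k - x k))
    (xs : EuclideanSpace ℝ (Fin m))
    (hcluster : MapClusterPt xs atTop x)
    -- ∇g is Lipschitz continuous on a neighborhood of x*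
    (hLip : ∃ L : NNReal, ∃ U ∈ 𝓝 xs, LipschitzOnWith L (fun z => gradient g z) U)
    -- φ satisfies the strong Kurdyka–Łojasiewicz inequality at x*
    (hKL : ∃ η > (0 : ℝ), ∃ U ∈ 𝓝 xs, ∃ ψ : ℝ → ℝ,
      ψ 0 = 0 ∧
      (∀ t ∈ Set.Icc (0 : ℝ) η, 0 ≤ ψ t) ∧
      ConcaveOn ℝ (Set.Icc (0 : ℝ) η) ψ ∧
      ContDiffOn ℝ 1 ψ (Set.Ioo (0 : ℝ) η) ∧
      (∀ t ∈ Set.Ioo (0 : ℝ) η, 0 < deriv ψ t) ∧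
      (∀ z ∈ U, φ xs < φ z → φ z < φ xs + η →
        1 ≤ deriv ψ (φ z - φ xs) *
          Metric.infDist 0 ((fun u => gradient g z - u) '' subdiff h z))) :
    Tendsto x atTop (𝓝 xs) ∧ gradient g xs ∈ subdiff h xs := by
  have hgconv : ConvexOn ℝ Set.univ g := by
    have := hg.add (sq_convexOn' (le_of_lt hρ) (E := EuclideanSpace ℝ (Fin m)))
    have he : ((fun z => g z - ρ / 2 * ‖z‖ ^ 2) +
        fun z : EuclideanSpace ℝ (Fin m) => ρ / 2 * ‖z‖ ^ 2) = g := by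
      funext z; simp only [Pi.add_apply]; ring
    rwa [he] at this
  set d : ℕ → EuclideanSpace ℝ (Fin m) := fun k => y k - x k with hd
  have hdk : ∀ k, y k - x k = d k := fun k => rfl
  have key1 : ∀ k, φ (y k) + ρ * ‖d k‖ ^ 2 ≤ φ (x k) := by
    intro k
    have hsg := strong_subgrad' hh (hsub k) (y k)
    have hgg := strong_subgrad' hg (grad_mem_subdiff' hgconv hg1 (y k)) (x k)
    have hswap : ⟪gradient g (y k), x k - y k⟫ = -⟪gradient g (y k), y k - x k⟫ := by
      rw [← inner_neg_right]; congr 1; abel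
    have hnorm : ‖x k - y k‖ = ‖y k - x k‖ := norm_sub_rev _ _
    rw [hswap, hnorm] at hgg
    simp only [hφ, hd]
    linarith [hsg, hgg]
  have key2 : ∀ k, φ (x (k + 1)) + (ρ + α * lam k ^ 2) * ‖d k‖ ^ 2 ≤ φ (x k) := by
    intro k
    have h1 := hdesc k
    rw [← hnext k, hdk k] at h1
    have := key1 k
    nlinarith [this, h1]
  have hmono : ∀ k, φ (x (k + 1)) ≤ φ (x k) := by
    intro k
    have := key2 k
    nlinarith [sq_nonneg ‖d k‖, sq_nonneg (lam k), mul_nonneg (mul_nonneg hα.le (sq_nonneg (lam k))) (sq_nonneg ‖d k‖)]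
  have hanti : Antitone fun k => φ (x k) := antitone_nat_of_succ_le hmono
  have hbdd2 : BddBelow (Set.range fun k => φ (x k)) := by
    obtain ⟨b, hb⟩ := hbdd
    refine ⟨b, ?_⟩
    rintro _ ⟨k, rfl⟩
    exact hb ⟨x k, rfl⟩
  have hℓ : Tendsto (fun k => φ (x k)) atTop (𝓝 (⨅ k, φ (x k))) :=
    tendsto_atTop_ciInf hanti hbdd2
  set ℓ : ℝ := ⨅ k, φ (x k) with hℓdef
  have hhcont : Continuous h := by
    have h1 : ContinuousOn (fun z => h z - ρ / 2 * ‖z‖ ^ 2) Set.univ :=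
      hh.continuousOn isOpen_univ
    have h2 : Continuous fun z : EuclideanSpace ℝ (Fin m) => h z - ρ / 2 * ‖z‖ ^ 2 :=
      continuousOn_univ.mp h1
    have h3 : Continuous fun z : EuclideanSpace ℝ (Fin m) => ρ / 2 * ‖z‖ ^ 2 :=
      continuous_const.mul (continuous_norm.pow 2)
    have he : h = fun z => (h z - ρ / 2 * ‖z‖ ^ 2) + ρ / 2 * ‖z‖ ^ 2 := by funext z; ring
    rw [he]; exact h2.add h3
  have hφcont : Continuous φ := by
    rw [hφ]; exact hg1.continuous.sub hhcont
  have hφxs : φ xs = ℓ :=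
    cluster_eq_of_tendsto' (hcluster.continuousAt_comp hφcont.continuousAt) hℓ
  have hge : ∀ k, ℓ ≤ φ (x k) := fun k => ciInf_le hbdd2 k
  have hdiff0 : Tendsto (fun k => φ (x k) - φ (x (k + 1))) atTop (𝓝 0) := by
    have h2 : Tendsto (fun k => φ (x (k + 1))) atTop (𝓝 ℓ) :=
      hℓ.comp (tendsto_add_atTop_nat 1)
    simpa using hℓ.sub h2
  have hnd0 : Tendsto (fun k => ‖d k‖) atTop (𝓝 0) := by
    have hsq : ∀ k, ‖d k‖ ^ 2 ≤ (φ (x k) - φ (x (k + 1))) / ρ := by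
      intro k
      rw [le_div_iff₀ hρ]
      nlinarith [key2 k, mul_nonneg (mul_nonneg hα.le (sq_nonneg (lam k))) (sq_nonneg ‖d k‖)]
    have hsq0 : Tendsto (fun k => ‖d k‖ ^ 2) atTop (𝓝 0) := by
      refine squeeze_zero (fun k => sq_nonneg _) hsq ?_
      simpa using hdiff0.div_const ρ
    have := (Real.continuous_sqrt.tendsto 0).comp hsq0
    simp only [Function.comp_def, Real.sqrt_zero] at this
    convert this using 2 with k
    rw [Real.sqrt_sq (norm_nonneg _)]
  have hcrit : Tendsto x atTop (𝓝 xs) → gradient g xs ∈ subdiff h xs := by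
    intro hx
    have hd0 : Tendsto d atTop (𝓝 0) := tendsto_zero_iff_norm_tendsto_zero.mpr hnd0
    have hy : Tendsto y atTop (𝓝 xs) := by
      have := hx.add hd0
      simpa [hd] using this
    intro z
    have hgy : Tendsto (fun k => gradient g (y k)) atTop (𝓝 (gradient g xs)) :=
      ((gradient_continuous' hg1).tendsto xs).comp hy
    have hlhs : Tendsto (fun k => h (x k) + ⟪gradient g (y k), z - x k⟫) atTop
        (𝓝 (h xs + ⟪gradient g xs, z - xs⟫)) := by
      refine Tendsto.add ((hhcont.tendsto xs).comp hx) ?_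
      exact hgy.inner (tendsto_const_nhds.sub hx)
    exact le_of_tendsto hlhs (Filter.Eventually.of_forall fun k => hsub k z)
  by_cases hA : ∃ K, φ (x K) = ℓ
  · obtain ⟨K, hK⟩ := hA
    have heq : ∀ k, K ≤ k → φ (x k) = ℓ := fun k hk =>
      le_antisymm (hK ▸ hanti hk) (hge k)
    have hconst : ∀ k, K ≤ k → x k = x K := by
      intro k hk
      induction k, hk using Nat.le_induction with
      | base => rfl
      | succ k hk ih =>
        have h1 : φ (x (k + 1)) = ℓ := heq _ (by omega)
        have h2 : φ (x k) = ℓ := heq _ hk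
        have h3 : ‖d k‖ ^ 2 ≤ 0 := by
          nlinarith [key2 k, mul_nonneg (mul_nonneg hα.le (sq_nonneg (lam k))) (sq_nonneg ‖d k‖)]
        have h4 : d k = 0 := by
          have : ‖d k‖ = 0 := by nlinarith [sq_nonneg ‖d k‖, norm_nonneg (d k)]
          exact norm_eq_zero.mp this
        have h5 : y k = x k := by
          have := h4
          rw [hd] at this
          exact sub_eq_zero.mp this
        rw [hnext k, hdk k, h4, smul_zero, add_zero, h5, ih]
    have hxlim : Tendsto x atTop (𝓝 (x K)) := tendsto_atTop_of_eventually_const hconst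
    have hxsK : xs = x K := cluster_eq_of_tendsto' hcluster hxlim
    subst hxsK
    exact ⟨hxlim, hcrit hxlim⟩
  · push_neg at hA
    have hgt : ∀ k, ℓ < φ (x k) := fun k => lt_of_le_of_ne (hge k) (Ne.symm (hA k))
    obtain ⟨η, hη, U, hU, ψ, hψ0, hψnn, hψconc, hψC1, hψd, hKLineq⟩ := hKL
    obtain ⟨L, UL, hUL, hLipL⟩ := hLip
    set Lr : ℝ := (L : ℝ) + 1 with hLrdef
    have hLrpos : (0 : ℝ) < Lr := by rw [hLrdef]; positivity
    have hLip' : ∀ a ∈ UL, ∀ b ∈ UL, ‖gradient g a - gradient g b‖ ≤ Lr * ‖a - b‖ := by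
      intro a ha b hb
      have h1 := hLipL.dist_le_mul a ha b hb
      rw [dist_eq_norm, dist_eq_norm] at h1
      have h2 : (L : ℝ) ≤ Lr := by rw [hLrdef]; linarith
      nlinarith [norm_nonneg (a - b)]
    set c : ℝ := min (ρ / 2) α with hcdef
    have hcpos : 0 < c := lt_min (by linarith) hα
    have hcρ : c ≤ ρ / 2 := by rw [hcdef]; exact min_le_left _ _
    have hcα : c ≤ α := by rw [hcdef]; exact min_le_right _ _
    have hψmono : StrictMonoOn ψ (Set.Ioo 0 η) :=
      strictMonoOn_of_deriv_pos (convex_Ioo 0 η) hψC1.continuousOn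
        (fun t ht => hψd t (by rwa [interior_Ioo] at ht))
    set s : ℕ → ℝ := fun k => φ (x k) - φ xs with hs
    have hsdef : ∀ k, s k = φ (x k) - φ xs := fun k => by simp only [hs]
    have hspos : ∀ k, 0 < s k := fun k => by
      rw [hsdef k]; have := hgt k; rw [hφxs]; linarith
    have hs_anti : Antitone s := fun a b hab => by
      rw [hsdef a, hsdef b]; exact sub_le_sub_right (hanti hab) _
    have hs0 : Tendsto s atTop (𝓝 0) := by
      have h2 := hℓ.sub_const (φ xs)
      have h0 : ℓ - φ xs = 0 := by rw [hφxs, sub_self]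
      rw [h0] at h2
      rw [hs]; exact h2
    have hUin : U ∩ UL ∈ 𝓝 xs := Filter.inter_mem hU hUL
    obtain ⟨ε, hε, hball⟩ := Metric.mem_nhds_iff.mp hUin
    set r : ℝ := ε / 3 with hrdef
    have hr : 0 < r := by rw [hrdef]; positivity
    have hball3 : Metric.ball xs (3 * r) ⊆ U ∩ UL := by
      intro w hw
      apply hball
      rw [Metric.mem_ball] at hw ⊢
      rw [hrdef] at hw
      linarith
    have hsη : ∀ᶠ k in atTop, s k < η := hs0.eventually_lt_const hη
    have hndr : ∀ᶠ k in atTop, ‖d k‖ < r := hnd0.eventually_lt_const hr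
    obtain ⟨N₁, hN₁⟩ := Filter.eventually_atTop.mp (hsη.and hndr)
    have hsmem : ∀ k, N₁ ≤ k → s k ∈ Set.Ioo (0 : ℝ) η :=
      fun k hk => ⟨hspos k, lt_of_le_of_lt (hs_anti hk) (hN₁ N₁ le_rfl).1⟩
    set u : ℕ → ℝ := fun j => ψ (s (N₁ + j)) with hu
    have humem : ∀ j, s (N₁ + j) ∈ Set.Ioo (0 : ℝ) η := fun j => hsmem _ (Nat.le_add_right _ _)
    have hu_anti : Antitone u := by
      intro a b hab
      simp only [hu]
      exact hψmono.monotoneOn (humem b) (humem a) (hs_anti (by omega))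
    have hu_bdd : BddBelow (Set.range u) := by
      refine ⟨0, ?_⟩
      rintro _ ⟨j, rfl⟩
      exact hψnn _ (Set.Ioo_subset_Icc_self (humem j))
    have huc : Tendsto u atTop (𝓝 (⨅ j, u j)) := tendsto_atTop_ciInf hu_anti hu_bdd
    set c₀ : ℝ := ⨅ j, u j with hc₀
    have hc₀le : ∀ k, N₁ ≤ k → c₀ ≤ ψ (s k) := by
      intro k hk
      have he : N₁ + (k - N₁) = k := by omega
      have h2 := ciInf_le hu_bdd (k - N₁)
      simp only [hu] at h2
      rw [he] at h2
      exact h2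
    -- per-step estimate
    have step : ∀ k, N₁ ≤ k → x k ∈ Metric.ball xs (2 * r) →
        (c / Lr) * dist (x (k + 1)) (x k) ≤ ψ (s k) - ψ (s (k + 1)) := by
      intro k hk hxk
      have hndk : ‖d k‖ < r := (hN₁ k hk).2
      have hxk3 : x k ∈ Metric.ball xs (3 * r) := by
        rw [Metric.mem_ball] at hxk ⊢; linarith
      have hyk3 : y k ∈ Metric.ball xs (3 * r) := by
        rw [Metric.mem_ball]
        have h1 : dist (y k) (x k) = ‖d k‖ := by rw [dist_eq_norm, hdk k]
        have h2 := dist_triangle (y k) (x k) xs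
        rw [Metric.mem_ball] at hxk
        linarith
      have hxU : x k ∈ U := (hball3 hxk3).1
      have hxUL : x k ∈ UL := (hball3 hxk3).2
      have hyUL : y k ∈ UL := (hball3 hyk3).2
      have hsk : s k ∈ Set.Ioo (0 : ℝ) η := hsmem k hk
      have hKLk := hKLineq (x k) hxU (by rw [hφxs]; exact hgt k)
        (by have h6 := hsk.2; rw [hsdef k] at h6; linarith)
      rw [← hsdef k] at hKLk
      have hApos : 0 < deriv ψ (s k) := hψd _ hsk
      have hmemD : gradient g (x k) - gradient g (y k) ∈
          (fun u => gradient g (x k) - u) '' subdiff h (x k) := ⟨_, hsub k, rfl⟩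
      have hDle : Metric.infDist 0 ((fun u => gradient g (x k) - u) '' subdiff h (x k)) ≤
          ‖gradient g (x k) - gradient g (y k)‖ := by
        have h2 := Metric.infDist_le_dist_of_mem (x := (0 : EuclideanSpace ℝ (Fin m))) hmemD
        rwa [dist_zero_left] at h2
      have hLipk : ‖gradient g (x k) - gradient g (y k)‖ ≤ Lr * ‖d k‖ := by
        have h2 := hLip' (x k) hxUL (y k) hyUL
        have hnn : ‖x k - y k‖ = ‖d k‖ := by rw [norm_sub_rev, hdk k]
        rwa [hnn] at h2
      have h1 : 1 ≤ deriv ψ (s k) * (Lr * ‖d k‖) :=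
        hKLk.trans (mul_le_mul_of_nonneg_left (hDle.trans hLipk) hApos.le)
      have hsle : s (k + 1) ≤ s k := hs_anti (Nat.le_succ k)
      have hconc : deriv ψ (s k) * (s k - s (k + 1)) ≤ ψ (s k) - ψ (s (k + 1)) := by
        rcases eq_or_lt_of_le hsle with heq | hlt
        · rw [heq]; simp
        · have hdiffat : DifferentiableAt ℝ ψ (s k) :=
            (hψC1.differentiableOn one_ne_zero).differentiableAt (isOpen_Ioo.mem_nhds hsk)
          have hsl := hψconc.deriv_le_slope
            (Set.mem_Icc.mpr ⟨(hspos (k + 1)).le, le_trans hsle hsk.2.le⟩)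
            (Set.mem_Icc.mpr ⟨hsk.1.le, hsk.2.le⟩) hlt hdiffat
          rw [slope_def_field] at hsl
          have hposd : 0 < s k - s (k + 1) := by linarith
          rw [le_div_iff₀ hposd] at hsl
          linarith
      have hsdiff : s k - s (k + 1) = φ (x k) - φ (x (k + 1)) := by
        rw [hsdef k, hsdef (k + 1)]; ring
      have hdesc2 : (ρ + α * lam k ^ 2) * ‖d k‖ ^ 2 ≤ s k - s (k + 1) := by
        rw [hsdiff]; linarith [key2 k]
      have hcineq : c * (1 + lam k) ≤ ρ + α * lam k ^ 2 := by
        nlinarith [hlam k, mul_nonneg hcpos.le (sq_nonneg (lam k - 1)),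
          mul_nonneg (sub_nonneg.mpr hcα) (sq_nonneg (lam k))]
      have hxx : dist (x (k + 1)) (x k) = (1 + lam k) * ‖d k‖ := by
        rw [dist_eq_norm, hnext k]
        have he : y k + lam k • (y k - x k) - x k = (1 + lam k) • (y k - x k) := by
          rw [add_smul, one_smul]; abel
        rw [he, hdk k, norm_smul, Real.norm_eq_abs, abs_of_nonneg (by linarith [hlam k])]
      rw [hxx]
      have e1 : c * (1 + lam k) * ‖d k‖ ^ 2 ≤ (ρ + α * lam k ^ 2) * ‖d k‖ ^ 2 :=
        mul_le_mul_of_nonneg_right hcineq (sq_nonneg _)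
      have e2 : deriv ψ (s k) * (c * (1 + lam k) * ‖d k‖ ^ 2) ≤ ψ (s k) - ψ (s (k + 1)) := by
        have h3 := mul_le_mul_of_nonneg_left (e1.trans hdesc2) hApos.le
        linarith
      have e3 : (c / Lr) * ((1 + lam k) * ‖d k‖) ≤
          deriv ψ (s k) * (c * (1 + lam k) * ‖d k‖ ^ 2) := by
        have hfac : (0 : ℝ) ≤ (c / Lr) * ((1 + lam k) * ‖d k‖) :=
          mul_nonneg (div_nonneg hcpos.le hLrpos.le)
            (mul_nonneg (by linarith [hlam k]) (norm_nonneg _))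
        have h4 := mul_le_mul_of_nonneg_left h1 hfac
        have h5 : (c / Lr) * ((1 + lam k) * ‖d k‖) * (deriv ψ (s k) * (Lr * ‖d k‖)) =
            deriv ψ (s k) * (c * (1 + lam k) * ‖d k‖ ^ 2) := by
          field_simp
        rw [h5, mul_one] at h4
        exact h4
      linarith
    -- choice of N
    have hev2 : ∀ᶠ j in atTop, u j < c₀ + (c / Lr) * r := by
      refine huc.eventually_lt_const ?_
      have : 0 < (c / Lr) * r := by positivity
      linarith
    obtain ⟨J, hJ⟩ := Filter.eventually_atTop.mp hev2
    have hfreq : ∃ᶠ k in atTop, x k ∈ Metric.ball xs r :=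
      mapClusterPt_iff_frequently.mp hcluster _ (Metric.ball_mem_nhds xs hr)
    obtain ⟨N, hNball, hNge⟩ :=
      (hfreq.and_eventually (Filter.eventually_ge_atTop (N₁ + J))).exists
    have hN₁N : N₁ ≤ N := by omega
    have hψN : ψ (s N) - c₀ < (c / Lr) * r := by
      have he : N₁ + (N - N₁) = N := by omega
      have h2 := hJ (N - N₁) (by omega)
      simp only [hu] at h2
      rw [he] at h2
      linarith
    -- trapping
    have trap : ∀ k, N ≤ k → x k ∈ Metric.ball xs (2 * r) ∧
        dist (x k) (x N) ≤ (Lr / c) * (ψ (s N) - ψ (s k)) := by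
      intro k hk
      induction k, hk using Nat.le_induction with
      | base =>
        constructor
        · rw [Metric.mem_ball] at hNball ⊢; linarith
        · simp
      | succ k hk ih =>
        have hstep := step k (le_trans hN₁N hk) ih.1
        have hd2 : dist (x (k + 1)) (x k) ≤ (Lr / c) * (ψ (s k) - ψ (s (k + 1))) := by
          have h4 := mul_le_mul_of_nonneg_left hstep (le_of_lt (div_pos hLrpos hcpos))
          have h5 : (Lr / c) * ((c / Lr) * dist (x (k + 1)) (x k)) = dist (x (k + 1)) (x k) := by
            field_simp
          rw [h5] at h4
          exact h4
        have hdN : dist (x (k + 1)) (x N) ≤ (Lr / c) * (ψ (s N) - ψ (s (k + 1))) := by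
          have ht := dist_triangle (x (k + 1)) (x k) (x N)
          have hR : (Lr / c) * (ψ (s k) - ψ (s (k + 1))) + (Lr / c) * (ψ (s N) - ψ (s k)) =
              (Lr / c) * (ψ (s N) - ψ (s (k + 1))) := by ring
          linarith [ih.2]
        refine ⟨?_, hdN⟩
        have hc₀k : c₀ ≤ ψ (s (k + 1)) := hc₀le (k + 1) (by omega)
        have hb : (Lr / c) * (ψ (s N) - ψ (s (k + 1))) ≤ (Lr / c) * (ψ (s N) - c₀) :=
          mul_le_mul_of_nonneg_left (by linarith) (le_of_lt (div_pos hLrpos hcpos))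
        have hb2 : (Lr / c) * (ψ (s N) - c₀) < r := by
          have h6 := mul_lt_mul_of_pos_left hψN (div_pos hLrpos hcpos)
          have he2 : (Lr / c) * ((c / Lr) * r) = r := by field_simp
          rw [he2] at h6
          exact h6
        rw [Metric.mem_ball]
        have ht2 := dist_triangle (x (k + 1)) (x N) xs
        rw [Metric.mem_ball] at hNball
        linarith
    have inball : ∀ k, N ≤ k → x k ∈ Metric.ball xs (2 * r) := fun k hk => (trap k hk).1
    -- two-index bound
    have bound2 : ∀ k, N ≤ k → ∀ n, k ≤ n →
        dist (x n) (x k) ≤ (Lr / c) * (ψ (s k) - ψ (s n)) := by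
      intro k hk n hn
      induction n, hn using Nat.le_induction with
      | base => simp
      | succ n hn ih =>
        have hstep := step n (by omega) (inball n (by omega))
        have hd2 : dist (x (n + 1)) (x n) ≤ (Lr / c) * (ψ (s n) - ψ (s (n + 1))) := by
          have h4 := mul_le_mul_of_nonneg_left hstep (le_of_lt (div_pos hLrpos hcpos))
          have h5 : (Lr / c) * ((c / Lr) * dist (x (n + 1)) (x n)) = dist (x (n + 1)) (x n) := by
            field_simp
          rw [h5] at h4
          exact h4
        have ht := dist_triangle (x (n + 1)) (x n) (x k)
        have hR : (Lr / c) * (ψ (s n) - ψ (s (n + 1))) + (Lr / c) * (ψ (s k) - ψ (s n)) =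
            (Lr / c) * (ψ (s k) - ψ (s (n + 1))) := by ring
        linarith
    -- Cauchy
    have hcauchy : CauchySeq x := by
      rw [Metric.cauchySeq_iff']
      intro ε' hε'
      have hev3 : ∀ᶠ j in atTop, u j < c₀ + (c / Lr) * ε' := by
        refine huc.eventually_lt_const ?_
        have : 0 < (c / Lr) * ε' := by positivity
        linarith
      obtain ⟨J', hJ'⟩ := Filter.eventually_atTop.mp hev3
      refine ⟨max N (N₁ + J'), fun n hn => ?_⟩
      set M := max N (N₁ + J') with hM
      have hMN : N ≤ M := le_max_left _ _
      have hMJ : N₁ + J' ≤ M := le_max_right _ _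
      have hψM : ψ (s M) - c₀ < (c / Lr) * ε' := by
        have he : N₁ + (M - N₁) = M := by omega
        have h2 := hJ' (M - N₁) (by omega)
        simp only [hu] at h2
        rw [he] at h2
        linarith
      have hb := bound2 M hMN n hn
      have hc₀n : c₀ ≤ ψ (s n) := hc₀le n (by omega)
      have hb3 : (Lr / c) * (ψ (s M) - ψ (s n)) ≤ (Lr / c) * (ψ (s M) - c₀) :=
        mul_le_mul_of_nonneg_left (by linarith) (le_of_lt (div_pos hLrpos hcpos))
      have hb4 : (Lr / c) * (ψ (s M) - c₀) < ε' := by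
        have h6 := mul_lt_mul_of_pos_left hψM (div_pos hLrpos hcpos)
        have he2 : (Lr / c) * ((c / Lr) * ε') = ε' := by field_simp
        rw [he2] at h6
        exact h6
      calc dist (x n) (x M) ≤ (Lr / c) * (ψ (s M) - ψ (s n)) := hb
        _ ≤ (Lr / c) * (ψ (s M) - c₀) := hb3
        _ < ε' := hb4
    obtain ⟨p, hp⟩ := cauchySeq_tendsto_of_complete hcauchy
    have hxp : xs = p := cluster_eq_of_tendsto' hcluster hp
    rw [← hxp] at hp
    exact ⟨hp, hcrit hp⟩
end
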